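/- arXiv:1512.01038 — 13 statements merged into one kernel-verified Lean document; each statement's English description precedes it below -/
import Mathlib

section
/- Let α11, α22, β11, β12, γ22 be real numbers and let A(u) be the associated structured diffusion matrix and H(u) the entropy Hessian. Then the matrix H(u)A(u) is positive semidefinite (i.e. zᵀH(u)A(u)z ≥ 0 for all z ∈ ℝ²) for every u ∈ D if and only if α11 ≥ 0, α22 ≥ 0, β12 ≤ α11 + min{β11, γ22}, α11 + β11 ≥ 0, and α22 + γ22 ≥ 0. -/
open Matrix Filter Topology

/-!
Multiplied by `u₁u₂u₃`, the quadratic form of `H(u)A(u)` becomes `u₂X z₁² + 2u₁u₂C z₁z₂ + u₁Y z₂²`,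
where `X`, `Y`, `C` are forms in `(u₁, u₂, u₃)` with coefficients among `α11`, `α22`, `α11 + β11`,
`α22 + γ22`, `α11 + β11 - β12`, `α11 + γ22 - β12`, and `XY - u₁u₂C² = u₃(u₁ + u₂ + u₃)K` with `K`
a form whose coefficients are sums of products of these six numbers. The conditions of the theorem
say exactly that the six numbers are nonnegative; then `X, Y, K ≥ 0` and the form is nonnegative
by the discriminant criterion. Conversely `X, Y ≥ 0` on the triangle, and letting `u` tend to a
vertex, or to a vertex tangentially to an edge, isolates each of the six numbers.
-/

/-- The Hessian of the entropy density `h(u) = Σ uᵢ(log uᵢ - 1)` with `u₃ = 1-u₁-u₂`. -/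
noncomputable def Hmat (u1 u2 : ℝ) : Matrix (Fin 2) (Fin 2) ℝ :=
  !![1/u1 + 1/(1-u1-u2), 1/(1-u1-u2); 1/(1-u1-u2), 1/u2 + 1/(1-u1-u2)]

/-- The structured diffusion matrix with parameters `(α11, α22, β11, β12, γ22)`,
where `γ21 = α22 - α11 + β12`, `β22 = β11 - γ21`, `γ11 = γ22 - β12`. -/
noncomputable def Amat (a11 a22 b11 b12 g22 u1 u2 : ℝ) : Matrix (Fin 2) (Fin 2) ℝ :=
  !![a11 + b11*u1 + (g22 - b12)*u2, b12*u1;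
     (a22 - a11 + b12)*u2, a22 + (b11 - (a22 - a11 + b12))*u1 + g22*u2]

theorem quadratic_nonneg_of_sq_le_mul {R : Type*} [CommRing R] [LinearOrder R]
    [IsStrictOrderedRing R] {a b c : R} (ha : 0 ≤ a) (hc : 0 ≤ c) (hb : b ^ 2 ≤ a * c)
    (x y : R) : 0 ≤ a * x ^ 2 + 2 * b * x * y + c * y ^ 2 := by
  rcases ha.eq_or_lt with rfl | ha
  · obtain rfl : b = 0 := by nlinarith [sq_nonneg b]
    nlinarith [mul_nonneg hc (sq_nonneg y)]
  · nlinarith [sq_nonneg (a * x + b * y), mul_nonneg (sub_nonneg.2 hb) (sq_nonneg y)]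

theorem nonneg_of_forall_mem_Ioo_nonneg {f : ℝ → ℝ} (hf : ContinuousAt f 0) {δ : ℝ}
    (hδ : 0 < δ) (h : ∀ x ∈ Set.Ioo 0 δ, 0 ≤ f x) : 0 ≤ f 0 :=
  ge_of_tendsto (hf.tendsto.mono_left (nhdsWithin_le_nhds (s := Set.Ioi 0)))
    (Filter.mem_of_superset (Ioo_mem_nhdsGT hδ) h)

/-- `u₁ u₃ (H A)₁₁` with `p = α11`, `r = α11 + β11`, `t = α22 + γ22`, `m = α11 + γ22 - β12`;
swapping the two species turns it into `u₂ u₃ (H A)₂₂`. -/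
def diagForm (p r t m u1 u2 u3 : ℝ) : ℝ :=
  p * u3 * (u1 + u3) + r * u1 * (u1 + u3) + t * u1 * u2 + m * u2 * u3

theorem nonneg_of_diagForm_nonneg {p r t m : ℝ}
    (h : ∀ u1 u2 : ℝ, 0 < u1 → 0 < u2 → u1 + u2 < 1 → 0 ≤ diagForm p r t m u1 u2 (1 - u1 - u2)) :
    0 ≤ p ∧ 0 ≤ r ∧ 0 ≤ m := by
  refine ⟨?_, ?_, ?_⟩
  · simpa [diagForm] using nonneg_of_forall_mem_Ioo_nonneg
      (f := fun x => diagForm p r t m x x (1 - x - x)) (by unfold diagForm; fun_prop)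
      one_half_pos fun x hx => h x x hx.1 hx.1 (by linarith [hx.2])
  · simpa [diagForm] using nonneg_of_forall_mem_Ioo_nonneg
      (f := fun x => diagForm p r t m (1 - 2 * x) x (1 - (1 - 2 * x) - x))
      (by unfold diagForm; fun_prop)
      one_half_pos fun x hx => h _ x (by linarith [hx.2]) hx.1 (by linarith [hx.1])
  · -- along `u = (x², 1 - x - x², x)` the form is `x (m + O(x))`
    have := nonneg_of_forall_mem_Ioo_nonneg
      (f := fun x => p * (x ^ 2 + x) + r * x * (x ^ 2 + x) + t * x * (1 - x - x ^ 2) +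
        m * (1 - x - x ^ 2))
      (by fun_prop) one_half_pos fun x ⟨hx0, hx1⟩ => by
        have hx := h (x ^ 2) (1 - x - x ^ 2) (by positivity) (by nlinarith) (by nlinarith)
        refine nonneg_of_mul_nonneg_right (a := x) (le_of_le_of_eq hx ?_) hx0
        unfold diagForm; ring
    simpa using this

theorem diagForm_nonneg {p r t m u1 u2 u3 : ℝ} (hp : 0 ≤ p) (hr : 0 ≤ r) (ht : 0 ≤ t)
    (hm : 0 ≤ m) (hu1 : 0 ≤ u1) (hu2 : 0 ≤ u2) (hu3 : 0 ≤ u3) : 0 ≤ diagForm p r t m u1 u2 u3 := by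
  unfold diagForm; positivity

theorem mul_sq_le_diagForm_mul_diagForm {p q r s t m1 m2 u1 u2 u3 : ℝ} (hp : 0 ≤ p) (hq : 0 ≤ q)
    (hr : 0 ≤ r) (ht : 0 ≤ t) (hm1 : 0 ≤ m1) (hm2 : 0 ≤ m2) (hs1 : q + r - m1 = s)
    (hs2 : p + t - m2 = s) (hu1 : 0 ≤ u1) (hu2 : 0 ≤ u2) (hu3 : 0 ≤ u3) :
    u1 * u2 * (r * u1 + t * u2 + s * u3) ^ 2 ≤
      diagForm p r t m2 u1 u2 u3 * diagForm q t r m1 u2 u1 u3 := by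
  have key : diagForm p r t m2 u1 u2 u3 * diagForm q t r m1 u2 u1 u3 -
      u1 * u2 * (r * u1 + t * u2 + s * u3) ^ 2 =
      u3 * (u1 + u2 + u3) * (r * m1 * u1 ^ 2 + (r * m2 + t * m1) * u1 * u2 + t * m2 * u2 ^ 2 +
        (p * m1 + q * r) * u1 * u3 + (q * m2 + p * t) * u2 * u3 + p * q * u3 ^ 2) := by
    subst hs1
    obtain rfl : m2 = p + t - q - r + m1 := by linarith
    unfold diagForm; ring
  have : 0 ≤ u3 * (u1 + u2 + u3) * (r * m1 * u1 ^ 2 + (r * m2 + t * m1) * u1 * u2 +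
      t * m2 * u2 ^ 2 + (p * m1 + q * r) * u1 * u3 + (q * m2 + p * t) * u2 * u3 + p * q * u3 ^ 2) := by
    positivity
  linarith

theorem dotProduct_mulVec_fin_two {R : Type*} [CommRing R] (M : Matrix (Fin 2) (Fin 2) R)
    (z : Fin 2 → R) :
    z ⬝ᵥ M *ᵥ z = M 0 0 * z 0 ^ 2 + (M 0 1 + M 1 0) * z 0 * z 1 + M 1 1 * z 1 ^ 2 := by
  simp only [dotProduct, mulVec, Fin.sum_univ_two]; ring

theorem mul_quadForm_Hmat_mul_Amat (a11 a22 b11 b12 g22 : ℝ) {u1 u2 : ℝ} (hu1 : 0 < u1)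
    (hu2 : 0 < u2) (hu : u1 + u2 < 1) (z : Fin 2 → ℝ) :
    u1 * u2 * (1 - u1 - u2) * (z ⬝ᵥ (Hmat u1 u2 * Amat a11 a22 b11 b12 g22 u1 u2) *ᵥ z) =
      u2 * diagForm a11 (a11 + b11) (a22 + g22) (a11 + g22 - b12) u1 u2 (1 - u1 - u2) * z 0 ^ 2 +
      2 * (u1 * u2 * ((a11 + b11) * u1 + (a22 + g22) * u2 + (a22 + b12) * (1 - u1 - u2))) *
        z 0 * z 1 +
      u1 * diagForm a22 (a22 + g22) (a11 + b11) (a11 + b11 - b12) u2 u1 (1 - u1 - u2) * z 1 ^ 2 := by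
  have hu3 : 1 - u1 - u2 ≠ 0 := by linarith
  rw [dotProduct_mulVec_fin_two]
  simp only [Hmat, one_div, Amat, Matrix.mul_apply, of_apply, cons_val', cons_val_fin_one,
    cons_val_zero, Fin.sum_univ_two, cons_val_one, diagForm]
  field_simp
  ring

theorem diagForm_nonneg_of_quadForm_nonneg {a11 a22 b11 b12 g22 u1 u2 : ℝ} (hu1 : 0 < u1)
    (hu2 : 0 < u2) (hu : u1 + u2 < 1)
    (h : ∀ z : Fin 2 → ℝ, 0 ≤ z ⬝ᵥ (Hmat u1 u2 * Amat a11 a22 b11 b12 g22 u1 u2) *ᵥ z) :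
    0 ≤ diagForm a11 (a11 + b11) (a22 + g22) (a11 + g22 - b12) u1 u2 (1 - u1 - u2) ∧
      0 ≤ diagForm a22 (a22 + g22) (a11 + b11) (a11 + b11 - b12) u2 u1 (1 - u1 - u2) := by
  have hu3 : 0 < 1 - u1 - u2 := by linarith
  have hD : 0 ≤ u1 * u2 * (1 - u1 - u2) := by positivity
  have e0 := mul_quadForm_Hmat_mul_Amat a11 a22 b11 b12 g22 hu1 hu2 hu ![1, 0]
  have e1 := mul_quadForm_Hmat_mul_Amat a11 a22 b11 b12 g22 hu1 hu2 hu ![0, 1]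
  simp only [cons_val_zero, cons_val_one, ne_eq, OfNat.ofNat_ne_zero, not_false_eq_true,
    zero_pow, one_pow, mul_one, mul_zero, add_zero, zero_add] at e0 e1
  exact ⟨nonneg_of_mul_nonneg_right (e0 ▸ mul_nonneg hD (h _)) hu2,
    nonneg_of_mul_nonneg_right (e1 ▸ mul_nonneg hD (h _)) hu1⟩

theorem quadForm_Hmat_mul_Amat_nonneg {a11 a22 b11 b12 g22 u1 u2 : ℝ} (hp : 0 ≤ a11)
    (hq : 0 ≤ a22) (hr : 0 ≤ a11 + b11) (ht : 0 ≤ a22 + g22) (hm1 : 0 ≤ a11 + b11 - b12)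
    (hm2 : 0 ≤ a11 + g22 - b12) (hu1 : 0 < u1) (hu2 : 0 < u2) (hu : u1 + u2 < 1)
    (z : Fin 2 → ℝ) : 0 ≤ z ⬝ᵥ (Hmat u1 u2 * Amat a11 a22 b11 b12 g22 u1 u2) *ᵥ z := by
  have hu3 : 0 < 1 - u1 - u2 := by linarith
  refine nonneg_of_mul_nonneg_right ?_ (by positivity : 0 < u1 * u2 * (1 - u1 - u2))
  rw [mul_quadForm_Hmat_mul_Amat a11 a22 b11 b12 g22 hu1 hu2 hu]
  refine quadratic_nonneg_of_sq_le_mul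
    (mul_nonneg hu2.le (diagForm_nonneg hp hr ht hm2 hu1.le hu2.le hu3.le))
    (mul_nonneg hu1.le (diagForm_nonneg hq ht hr hm1 hu2.le hu1.le hu3.le)) ?_ _ _
  have := mul_sq_le_diagForm_mul_diagForm hp hq hr ht hm1 hm2 (s := a22 + b12) (by ring) (by ring)
    hu1.le hu2.le hu3.le
  calc _ = u1 * u2 * (u1 * u2 *
          ((a11 + b11) * u1 + (a22 + g22) * u2 + (a22 + b12) * (1 - u1 - u2)) ^ 2) := by ring
    _ ≤ u1 * u2 * (diagForm a11 (a11 + b11) (a22 + g22) (a11 + g22 - b12) u1 u2 (1 - u1 - u2) *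
          diagForm a22 (a22 + g22) (a11 + b11) (a11 + b11 - b12) u2 u1 (1 - u1 - u2)) := by gcongr
    _ = _ := by ring

/-- The matrix `H(u)A(u)` is positive semidefinite for every `u ∈ D` if and only if
`α11 ≥ 0`, `α22 ≥ 0`, `β12 ≤ α11 + min{β11, γ22}`, `α11 + β11 ≥ 0`, `α22 + γ22 ≥ 0`. -/
theorem stmt0 (a11 a22 b11 b12 g22 : ℝ) :
    (∀ u1 u2 : ℝ, 0 < u1 → 0 < u2 → u1 + u2 < 1 → ∀ z : Fin 2 → ℝ,
      0 ≤ z ⬝ᵥ ((Hmat u1 u2 * Amat a11 a22 b11 b12 g22 u1 u2).mulVec z)) ↔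
    (0 ≤ a11 ∧ 0 ≤ a22 ∧ b12 ≤ a11 + min b11 g22 ∧ 0 ≤ a11 + b11 ∧ 0 ≤ a22 + g22) := by
  rw [← sub_le_iff_le_add', le_min_iff]
  constructor
  · intro h
    obtain ⟨hp, hr, hm2⟩ := nonneg_of_diagForm_nonneg fun u1 u2 hu1 hu2 hu =>
      (diagForm_nonneg_of_quadForm_nonneg hu1 hu2 hu (h u1 u2 hu1 hu2 hu)).1
    obtain ⟨hq, ht, hm1⟩ := nonneg_of_diagForm_nonneg fun u2 u1 hu2 hu1 hu => by
      rw [show 1 - u2 - u1 = 1 - u1 - u2 by ring]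
      exact (diagForm_nonneg_of_quadForm_nonneg hu1 hu2 (by linarith)
        (h u1 u2 hu1 hu2 (by linarith))).2
    exact ⟨hp, hq, ⟨by linarith, by linarith⟩, hr, ht⟩
  · rintro ⟨hp, hq, ⟨hb11, hg22⟩, hr, ht⟩ u1 u2 hu1 hu2 hu z
    exact quadForm_Hmat_mul_Amat_nonneg hp hq hr ht (by linarith) (by linarith) hu1 hu2 hu z
end

section
/- Let α11, α22, β11, β12, γ22 be real numbers satisfying α11 > 0, α22 > 0, β12 < α11 + min{β11, γ22}, α11 + β11 ≥ 0, and α22 + γ22 ≥ 0. Then there exists ε > 0 such that for all z = (z1,z2) ∈ ℝ² and all u ∈ D, zᵀH(u)A(u)z ≥ ε(z1²/u1 + z2²/u2). -/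
open Matrix

theorem sum_mul_add_sum_mul_nonneg {ι κ : Type*} [Fintype ι] [Fintype κ] [Nonempty ι]
    {x f : ι → ℝ} {y g : κ → ℝ} (hx : ∀ i, 0 ≤ x i) (hy : ∀ j, 0 ≤ y j)
    (hxy : ∑ i, x i = ∑ j, y j) (hfg : ∀ i j, 0 ≤ f i + g j) :
    0 ≤ ∑ i, x i * f i + ∑ j, y j * g j := by
  obtain ⟨i₀, -, hmin⟩ := Finset.univ.exists_min_image f Finset.univ_nonempty
  have hf : (∑ i, x i) * f i₀ ≤ ∑ i, x i * f i := by
    rw [Finset.sum_mul]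
    exact Finset.sum_le_sum fun i _ ↦ mul_le_mul_of_nonneg_left (hmin i (Finset.mem_univ i)) (hx i)
  have hg : (∑ j, y j) * -f i₀ ≤ ∑ j, y j * g j := by
    rw [Finset.sum_mul]
    exact Finset.sum_le_sum fun j _ ↦ mul_le_mul_of_nonneg_left (by linarith [hfg i₀ j]) (hy j)
  rw [hxy] at hf
  linarith

theorem Fin.sum_univ_three_of_ne {M : Type*} [AddCommMonoid M] {f : Fin 3 → M} {i k l : Fin 3}
    (hik : i ≠ k) (hil : i ≠ l) (hkl : k ≠ l) : ∑ x, f x = f i + f k + f l := by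
  fin_cases i <;> fin_cases k <;> fin_cases l <;> simp_all [Fin.sum_univ_three] <;> abel

def pairFlux {ι : Type*} (u w : ι → ℝ) (i k : ι) : ℝ := u i * u k * w i * (w i - w k)

def entropyDissipation {ι : Type*} [Fintype ι] (c : ι → ι → ℝ) (u w : ι → ℝ) : ℝ :=
  ∑ i, ∑ k, c i k * pairFlux u w i k

theorem pairFlux_add_pairFlux_swap {ι : Type*} (u w : ι → ℝ) (i k : ι) :
    pairFlux u w i k + pairFlux u w k i = u i * u k * (w i - w k) ^ 2 := by
  unfold pairFlux
  ring

section Fintype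

variable {ι : Type*} [Fintype ι] {u w : ι → ℝ}

theorem sum_pairFlux (hsum : ∑ i, u i = 1) (hmean : ∑ i, u i * w i = 0) (i : ι) :
    ∑ k, pairFlux u w i k = u i * w i ^ 2 := by
  have : ∑ k, pairFlux u w i k = u i * w i * (w i * ∑ k, u k - ∑ k, u k * w k) := by
    simp only [pairFlux, Finset.mul_sum, ← Finset.sum_sub_distrib]
    exact Finset.sum_congr rfl fun _ _ ↦ by ring
  rw [this, hsum, hmean]
  ring

theorem entropyDissipation_add_row (hsum : ∑ i, u i = 1) (hmean : ∑ i, u i * w i = 0)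
    (c : ι → ι → ℝ) (r : ι → ℝ) :
    entropyDissipation (fun i k ↦ c i k + r i) u w =
      entropyDissipation c u w + ∑ i, r i * (u i * w i ^ 2) := by
  simp only [entropyDissipation, add_mul, Finset.sum_add_distrib, ← Finset.mul_sum,
    sum_pairFlux hsum hmean]

end Fintype

section ThreeSpecies

variable {u w : Fin 3 → ℝ}

theorem pairFlux_add_pairFlux_same_source (hsum : ∑ i, u i = 1) (hmean : ∑ i, u i * w i = 0)
    {i k l : Fin 3} (hik : i ≠ k) (hil : i ≠ l) (hkl : k ≠ l) :
    pairFlux u w i k + pairFlux u w i l = u i * w i ^ 2 := by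
  rw [Fin.sum_univ_three_of_ne hik hil hkl] at hsum hmean
  unfold pairFlux
  linear_combination (u i * w i ^ 2) * hsum - (u i * w i) * hmean

theorem pairFlux_add_pairFlux_same_target (hmean : ∑ i, u i * w i = 0)
    {i k l : Fin 3} (hik : i ≠ k) (hil : i ≠ l) (hkl : k ≠ l) :
    pairFlux u w i l + pairFlux u w k l = u l * ∑ x, u x * w x ^ 2 := by
  rw [Fin.sum_univ_three_of_ne hik hil hkl] at hmean ⊢
  unfold pairFlux
  linear_combination (-(u l) * w l) * hmean

theorem entropyDissipation_nonneg (hu : ∀ i, 0 ≤ u i) (hsum : ∑ i, u i = 1)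
    (hmean : ∑ i, u i * w i = 0) {c : Fin 3 → Fin 3 → ℝ} (hc : ∀ i k, i ≠ k → 0 ≤ c i k)
    (hcycle : c 0 2 + c 1 0 + c 2 1 = c 0 1 + c 1 2 + c 2 0) :
    0 ≤ entropyDissipation c u w := by
  have hsplit : entropyDissipation c u w =
      ∑ i, ![c 0 2, c 1 0, c 2 1] i * ![pairFlux u w 0 2, pairFlux u w 1 0, pairFlux u w 2 1] i +
      ∑ j, ![c 0 1, c 1 2, c 2 0] j *
        ![pairFlux u w 0 1, pairFlux u w 1 2, pairFlux u w 2 0] j := by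
    simp only [entropyDissipation, pairFlux, Fin.sum_univ_three, sub_self, mul_zero, zero_add,
      add_zero, cons_val_zero, cons_val_one, cons_val]
    ring
  rw [hsplit]
  refine sum_mul_add_sum_mul_nonneg ?_ ?_ ?_ ?_
  · intro i; fin_cases i <;> exact hc _ _ (by decide)
  · intro j; fin_cases j <;> exact hc _ _ (by decide)
  · simpa [Fin.sum_univ_three] using hcycle
  · intro i j
    fin_cases i <;> fin_cases j <;> dsimp
    all_goals first
      | (rw [pairFlux_add_pairFlux_swap]; exact mul_nonneg (mul_nonneg (hu _) (hu _)) (sq_nonneg _))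
      | (rw [pairFlux_add_pairFlux_same_source hsum hmean (by decide) (by decide) (by decide)]
         exact mul_nonneg (hu _) (sq_nonneg _))
      | (rw [pairFlux_add_pairFlux_same_target hmean (by decide) (by decide) (by decide)]
         exact mul_nonneg (hu _) (Finset.sum_nonneg fun x _ ↦ mul_nonneg (hu x) (sq_nonneg _)))

end ThreeSpecies

/-- Indices `0, 1, 2` stand for species `1, 2, 3`; in the paper's notation `c₁₂ = α₁₁ + γ₁₁`,
`c₁₃ = α₁₁`, `c₂₁ = α₂₂ + β₂₂`, `c₂₃ = α₂₂`, `c₃₁ = α₁₁ + β₁₁`, `c₃₂ = α₂₂ + γ₂₂`. -/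
def crossDiffusionCoeff (a11 a22 b11 b12 g22 : ℝ) : Fin 3 → Fin 3 → ℝ :=
  ![![0, a11 + g22 - b12, a11], ![a11 + b11 - b12, 0, a22], ![a11 + b11, a22 + g22, 0]]

theorem quadForm_eq_entropyDissipation (a11 a22 b11 b12 g22 : ℝ) (z : Fin 2 → ℝ) {u1 u2 : ℝ}
    (hu1 : u1 ≠ 0) (hu2 : u2 ≠ 0) (hu3 : 1 - u1 - u2 ≠ 0) :
    z ⬝ᵥ ((Hmat u1 u2 * Amat a11 a22 b11 b12 g22 u1 u2) *ᵥ z) =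
      entropyDissipation (crossDiffusionCoeff a11 a22 b11 b12 g22) ![u1, u2, 1 - u1 - u2]
        ![z 0 / u1, z 1 / u2, -(z 0 + z 1) / (1 - u1 - u2)] := by
  simp only [dotProduct, mulVec, Hmat, Amat, Matrix.mul_apply, of_apply, cons_val',
    cons_val_fin_one, Fin.sum_univ_two, cons_val_zero, cons_val_one, entropyDissipation,
    crossDiffusionCoeff, pairFlux, Fin.sum_univ_three, cons_val, sub_self, mul_zero, zero_add,
    add_zero]
  field_simp
  ring

theorem crossDiffusionCoeff_sub_nonneg {a11 a22 b11 b12 g22 ε : ℝ} (h31 : 0 ≤ a11 + b11)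
    (h32 : 0 ≤ a22 + g22) (hε : ε ≤ min (min a11 a22) (min (a11 + b11 - b12) (a11 + g22 - b12)))
    (i k : Fin 3) (hik : i ≠ k) :
    0 ≤ crossDiffusionCoeff a11 a22 b11 b12 g22 i k - ![ε, ε, 0] i := by
  simp only [le_min_iff] at hε
  fin_cases i <;> fin_cases k <;> simp [crossDiffusionCoeff] at hik ⊢ <;> linarith

/-- Under the strict parameter conditions, there exists `ε > 0` such that
`zᵀH(u)A(u)z ≥ ε(z₁²/u₁ + z₂²/u₂)` for all `z ∈ ℝ²` and all `u ∈ D`. -/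
theorem stmt1 (a11 a22 b11 b12 g22 : ℝ)
    (h1 : 0 < a11) (h2 : 0 < a22) (h3 : b12 < a11 + min b11 g22)
    (h4 : 0 ≤ a11 + b11) (h5 : 0 ≤ a22 + g22) :
    ∃ ε > (0:ℝ), ∀ (z : Fin 2 → ℝ) (u1 u2 : ℝ), 0 < u1 → 0 < u2 → u1 + u2 < 1 →
      ε * ((z 0)^2 / u1 + (z 1)^2 / u2) ≤
        z ⬝ᵥ ((Hmat u1 u2 * Amat a11 a22 b11 b12 g22 u1 u2).mulVec z) := by
  set ε := min (min a11 a22) (min (a11 + b11 - b12) (a11 + g22 - b12))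
  have hε : 0 < ε := by
    simp only [ε, lt_min_iff]
    refine ⟨⟨h1, h2⟩, ?_, ?_⟩ <;> linarith [min_le_left b11 g22, min_le_right b11 g22]
  refine ⟨ε, hε, fun z u1 u2 hu1 hu2 hu12 ↦ ?_⟩
  have hu3 : 0 < 1 - u1 - u2 := by linarith
  set u : Fin 3 → ℝ := ![u1, u2, 1 - u1 - u2]
  set w : Fin 3 → ℝ := ![z 0 / u1, z 1 / u2, -(z 0 + z 1) / (1 - u1 - u2)]
  set c := crossDiffusionCoeff a11 a22 b11 b12 g22
  have hu : ∀ i, 0 ≤ u i := by intro i; fin_cases i <;> simp [u] <;> linarith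
  have hsum : ∑ i, u i = 1 := by simp [u, Fin.sum_univ_three]
  have hmean : ∑ i, u i * w i = 0 := by
    simp only [u, w, Fin.sum_univ_three, cons_val_zero, cons_val_one, cons_val]
    field_simp
    ring
  have hshift := entropyDissipation_add_row hsum hmean (fun i k ↦ c i k - ![ε, ε, 0] i) ![ε, ε, 0]
  simp only [sub_add_cancel] at hshift
  have hrow : ∑ i, ![ε, ε, 0] i * (u i * w i ^ 2) = ε * (z 0 ^ 2 / u1 + z 1 ^ 2 / u2) := by
    simp only [u, w, Fin.sum_univ_three, cons_val_zero, cons_val_one, cons_val, zero_mul, add_zero]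
    field_simp
  have hcycle : c 0 2 - ε + (c 1 0 - ε) + (c 2 1 - 0) = c 0 1 - ε + (c 1 2 - ε) + (c 2 0 - 0) := by
    simp only [c, crossDiffusionCoeff, cons_val', cons_val, cons_val_fin_one, cons_val_zero,
      cons_val_one]
    ring
  have hrest := entropyDissipation_nonneg hu hsum hmean
    (crossDiffusionCoeff_sub_nonneg h4 h5 le_rfl) hcycle
  rw [quadForm_eq_entropyDissipation _ _ _ _ _ _ hu1.ne' hu2.ne' hu3.ne', hshift, hrow]
  linarith
end

section
/- Let α11 = α22 = 0, let β11 > 0, γ22 > 0, and β12 < min{β11, γ22}. Then there exists ε > 0 such that for all z ∈ ℝ² and all u ∈ D, zᵀH(u)A(u)z ≥ ε|z|², where |z|² = z1² + z2². -/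
open Matrix

/-! Expanding `zᵀ H A z` on the triangle gives
`(β11 + p) z₁² + (γ22 + q) z₂² + 2 β12 z₁ z₂ + S (z₁ + z₂)²` with `S ≥ 0` and
`p = (γ22 - β12) u₂/u₁`, `q = (β11 - β12) u₁/u₂`. The product `p q = (β11 - β12)(γ22 - β12)`
does not depend on `u`, and it dominates `β12²` when `β12 < 0`; so the cross term is absorbed
by `p z₁² + q z₂²` if `β12 < 0`, and by `β12 (z₁ + z₂)² ≥ 0` if `β12 ≥ 0`. -/

lemma dotProduct_Hmat_mul_Amat_mulVec (b11 b12 g22 : ℝ) (z : Fin 2 → ℝ) {u1 u2 : ℝ}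
    (hu1 : u1 ≠ 0) (hu2 : u2 ≠ 0) (hu3 : 1 - u1 - u2 ≠ 0) :
    z ⬝ᵥ ((Hmat u1 u2 * Amat 0 0 b11 b12 g22 u1 u2).mulVec z) =
      (b11 + (g22 - b12) * u2 / u1) * z 0 ^ 2 + (g22 + (b11 - b12) * u1 / u2) * z 1 ^ 2
        + 2 * b12 * z 0 * z 1 + (b11 * u1 + g22 * u2) / (1 - u1 - u2) * (z 0 + z 1) ^ 2 := by
  simp only [Hmat, Amat, dotProduct, mulVec, Matrix.mul_apply, Fin.sum_univ_two, of_apply,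
    cons_val', cons_val_zero, cons_val_one, empty_val', cons_val_fin_one]
  field_simp
  ring

lemma quadratic_nonneg_of_sq_le_mul_s2 {p q c : ℝ} (hp : 0 < p) (hc : c ^ 2 ≤ p * q) (x y : ℝ) :
    0 ≤ p * x ^ 2 + q * y ^ 2 + 2 * c * x * y := by
  have h : p * (p * x ^ 2 + q * y ^ 2 + 2 * c * x * y) =
      (p * x + c * y) ^ 2 + (p * q - c ^ 2) * y ^ 2 := by
    ring
  have : 0 ≤ p * (p * x ^ 2 + q * y ^ 2 + 2 * c * x * y) := by
    rw [h]; exact add_nonneg (sq_nonneg _) (mul_nonneg (sub_nonneg.2 hc) (sq_nonneg _))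
  exact nonneg_of_mul_nonneg_right (by linarith) hp

lemma min_mul_sq_add_sq_le {b11 b12 g22 p q : ℝ} (h1 : 0 ≤ b11) (h2 : 0 ≤ g22)
    (hp : 0 < p) (hq : 0 < q) (hpq : p * q = (b11 - b12) * (g22 - b12)) (x y : ℝ) :
    min (min b11 g22) (min (b11 - b12) (g22 - b12)) * (x ^ 2 + y ^ 2) ≤
      (b11 + p) * x ^ 2 + (g22 + q) * y ^ 2 + 2 * b12 * x * y := by
  set ε := min (min b11 g22) (min (b11 - b12) (g22 - b12))
  have hx := sq_nonneg x
  have hy := sq_nonneg y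
  rcases le_or_gt 0 b12 with hb12 | hb12
  · have hε1 : ε ≤ b11 - b12 := (min_le_right _ _).trans (min_le_left _ _)
    have hε2 : ε ≤ g22 - b12 := (min_le_right _ _).trans (min_le_right _ _)
    linarith [mul_nonneg hb12 (sq_nonneg (x + y)), mul_le_mul_of_nonneg_right hε1 hx,
      mul_le_mul_of_nonneg_right hε2 hy, mul_nonneg hp.le hx, mul_nonneg hq.le hy]
  · have hε1 : ε ≤ b11 := (min_le_left _ _).trans (min_le_left _ _)
    have hε2 : ε ≤ g22 := (min_le_left _ _).trans (min_le_right _ _)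
    have hc : b12 ^ 2 ≤ p * q := by
      rw [hpq, sq, ← neg_mul_neg]
      exact mul_le_mul (by linarith) (by linarith) (by linarith) (by linarith)
    linarith [quadratic_nonneg_of_sq_le_mul_s2 hp hc x y, mul_le_mul_of_nonneg_right hε1 hx,
      mul_le_mul_of_nonneg_right hε2 hy]

/-- With `α11 = α22 = 0`, `β11 > 0`, `γ22 > 0`, `β12 < min{β11, γ22}`, there is `ε > 0`
with `zᵀH(u)A(u)z ≥ ε|z|²` for all `z ∈ ℝ²` and all `u ∈ D`. -/
theorem stmt2 (b11 b12 g22 : ℝ) (h1 : 0 < b11) (h2 : 0 < g22) (h3 : b12 < min b11 g22) :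
    ∃ ε > (0:ℝ), ∀ (z : Fin 2 → ℝ) (u1 u2 : ℝ), 0 < u1 → 0 < u2 → u1 + u2 < 1 →
      ε * ((z 0)^2 + (z 1)^2) ≤
        z ⬝ᵥ ((Hmat u1 u2 * Amat 0 0 b11 b12 g22 u1 u2).mulVec z) := by
  obtain ⟨hb, hg⟩ := lt_min_iff.1 h3
  refine ⟨_, lt_min (lt_min h1 h2) (lt_min (sub_pos.2 hb) (sub_pos.2 hg)),
    fun z u1 u2 hu1 hu2 hu12 => ?_⟩
  have hu3 : 0 < 1 - u1 - u2 := by linarith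
  rw [dotProduct_Hmat_mul_Amat_mulVec b11 b12 g22 z hu1.ne' hu2.ne' hu3.ne']
  have hp : 0 < (g22 - b12) * u2 / u1 := div_pos (mul_pos (sub_pos.2 hg) hu2) hu1
  have hq : 0 < (b11 - b12) * u1 / u2 := div_pos (mul_pos (sub_pos.2 hb) hu1) hu2
  have hpq : (g22 - b12) * u2 / u1 * ((b11 - b12) * u1 / u2) = (b11 - b12) * (g22 - b12) := by
    field_simp
  have hS : 0 ≤ (b11 * u1 + g22 * u2) / (1 - u1 - u2) * (z 0 + z 1) ^ 2 := by positivity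
  linarith [min_mul_sq_add_sq_le h1.le h2.le hp hq hpq (z 0) (z 1)]
end

section
/- Let α11, α22, β11, β12, γ22 be real numbers satisfying α11 ≥ 0, α22 ≥ 0, β12 ≤ α11 + min{β11, γ22}, α11 + β11 ≥ 0, and α22 + γ22 ≥ 0. Then det A(u) ≥ 0 for every u in the closed triangle {(u1,u2) : u1 ≥ 0, u2 ≥ 0, u1+u2 ≤ 1}. -/
/-!
In barycentric coordinates `(s, u1, u2)` of the triangle, `s = 1 - u1 - u2`, the diagonal
entries of `A(u)` are the linear forms `α11 s + q u1 + r u2` and `α22 s + Q u1 + R u2` with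
`q = α11 + β11`, `r = α11 + γ22 - β12`, `Q = α11 + β11 - β12`, `R = α22 + γ22`, and the product
of the off-diagonal entries is `(q - Q)(R - r) u1 u2`. The hypotheses say exactly that these six
coefficients are nonnegative, and then the determinant is a quadratic form in `(s, u1, u2)` all of
whose coefficients are nonnegative.
-/

open Matrix

theorem linear_mul_linear_sub_nonneg {p q r P Q R s x y : ℝ}
    (hp : 0 ≤ p) (hq : 0 ≤ q) (hr : 0 ≤ r) (hP : 0 ≤ P) (hQ : 0 ≤ Q) (hR : 0 ≤ R)
    (hs : 0 ≤ s) (hx : 0 ≤ x) (hy : 0 ≤ y) :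
    0 ≤ (p * s + q * x + r * y) * (P * s + Q * x + R * y) - (q - Q) * (R - r) * x * y := by
  have expand : (p * s + q * x + r * y) * (P * s + Q * x + R * y) - (q - Q) * (R - r) * x * y
      = p * P * s ^ 2 + q * Q * x ^ 2 + r * R * y ^ 2 + (p * Q + P * q) * s * x
        + (p * R + P * r) * s * y + (q * r + Q * R) * x * y := by ring
  rw [expand]
  positivity

theorem det_Amat_eq (a11 a22 b11 b12 g22 u1 u2 : ℝ) :
    (Amat a11 a22 b11 b12 g22 u1 u2).det =
      (a11 * (1 - u1 - u2) + (a11 + b11) * u1 + (a11 + g22 - b12) * u2)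
        * (a22 * (1 - u1 - u2) + (a11 + b11 - b12) * u1 + (a22 + g22) * u2)
      - ((a11 + b11) - (a11 + b11 - b12)) * ((a22 + g22) - (a11 + g22 - b12)) * u1 * u2 := by
  rw [Amat, det_fin_two_of]
  ring

/-- Under the parameter conditions, `det A(u) ≥ 0` on the closed triangle. -/
theorem stmt3 (a11 a22 b11 b12 g22 : ℝ)
    (h1 : 0 ≤ a11) (h2 : 0 ≤ a22) (h3 : b12 ≤ a11 + min b11 g22)
    (h4 : 0 ≤ a11 + b11) (h5 : 0 ≤ a22 + g22) :
    ∀ u1 u2 : ℝ, 0 ≤ u1 → 0 ≤ u2 → u1 + u2 ≤ 1 →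
      0 ≤ (Amat a11 a22 b11 b12 g22 u1 u2).det := by
  intro u1 u2 hu1 hu2 hsum
  have hQ : 0 ≤ a11 + b11 - b12 := by linarith [min_le_left b11 g22]
  have hr : 0 ≤ a11 + g22 - b12 := by linarith [min_le_right b11 g22]
  rw [det_Amat_eq]
  exact linear_mul_linear_sub_nonneg h1 h4 hr h2 hQ h5 (by linarith) hu1 hu2
end

section
/- Let α11, α22, β11, β12, γ22 be real numbers. The map u = (u1,u2) ↦ det A(u) is a quadratic polynomial in (u1,u2); let C ∈ ℝ^{2×2} denote its (constant) Hessian matrix. Then det C = −(β11β12 + γ22(α11 − α22 − β12))²; in particular det C ≤ 0. -/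
open Matrix

theorem hessian_eq_of_forall_eq {K : Type*} [Field K] [CharZero K]
    {a b c d e f a' b' c' d' e' f' : K}
    (h : ∀ x y : K, a * x ^ 2 + b * x * y + c * y ^ 2 + d * x + e * y + f =
      (a' * x ^ 2 + b' * x * y + c' * y ^ 2) / 2 + d' * x + e' * y + f') :
    a' = 2 * a ∧ b' = 2 * b ∧ c' = 2 * c := by
  have h00 := h 0 0
  have h10 := h 1 0
  have hm10 := h (-1) 0
  have h01 := h 0 1
  have h0m1 := h 0 (-1)
  have h11 := h 1 1
  have ha : a' = 2 * a := by linear_combination -(h10 + hm10 - 2 * h00)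
  have hc : c' = 2 * c := by linear_combination -(h01 + h0m1 - 2 * h00)
  refine ⟨ha, ?_, hc⟩
  linear_combination -2 * h11 + 2 * h00 + (h10 - hm10) + (h01 - h0m1) - ha - hc

theorem Amat_det (a11 a22 b11 b12 g22 u1 u2 : ℝ) :
    (Amat a11 a22 b11 b12 g22 u1 u2).det =
      b11 * (b11 + a11 - a22 - b12) * u1 ^ 2
        + (b11 * g22 + (g22 - b12) * (b11 + a11 - a22 - b12) - b12 * (a22 - a11 + b12)) * u1 * u2
        + g22 * (g22 - b12) * u2 ^ 2
        + (a11 * (b11 + a11 - a22 - b12) + a22 * b11) * u1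
        + (a11 * g22 + a22 * (g22 - b12)) * u2
        + a11 * a22 := by
  rw [Amat, det_fin_two_of]
  ring

/-- If `C` is the (symmetric, constant) Hessian of the quadratic polynomial
`u ↦ det A(u)`, then `det C = -(β11β12 + γ22(α11 - α22 - β12))² ≤ 0`. -/
theorem stmt4 (a11 a22 b11 b12 g22 : ℝ) (C : Matrix (Fin 2) (Fin 2) ℝ)
    (b : Fin 2 → ℝ) (c : ℝ) (hsym : C 0 1 = C 1 0)
    (hC : ∀ u1 u2 : ℝ, (Amat a11 a22 b11 b12 g22 u1 u2).det =
      (C 0 0 * u1^2 + (C 0 1 + C 1 0) * u1 * u2 + C 1 1 * u2^2) / 2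
        + b 0 * u1 + b 1 * u2 + c) :
    C.det = -(b11*b12 + g22*(a11 - a22 - b12))^2 ∧ C.det ≤ 0 := by
  obtain ⟨h00, h01, h11⟩ :=
    hessian_eq_of_forall_eq fun u1 u2 ↦ (Amat_det a11 a22 b11 b12 g22 u1 u2).symm.trans (hC u1 u2)
  have hoff : C 0 1 =
      b11 * g22 + (g22 - b12) * (b11 + a11 - a22 - b12) - b12 * (a22 - a11 + b12) := by
    linarith
  have hdet : C.det = -(b11*b12 + g22*(a11 - a22 - b12))^2 := by
    rw [det_fin_two, ← hsym, h00, h11, hoff]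
    ring
  exact ⟨hdet, hdet ▸ neg_nonpos.mpr (sq_nonneg _)⟩
end

section
/- Let a10, a20, a11, a12, a21, a22 be nonnegative real numbers with a10 > 0, a20 > 0 satisfying a21 = a11, a22 = a12, and a20 − a10 = a11 − a22 ≥ 0. Then there exists ε > 0 such that for all u ∈ D and all z = (z1,z2) ∈ ℝ², zᵀH(u)A_SKT(u)z ≥ ε(z1²/u1 + z2²/u2), where A_SKT(u) = [[a10 + 2a11 u1 + a12 u2, a12 u1],[a21 u2, a20 + a21 u1 + 2a22 u2]] is the Shigesada–Kawasaki–Teramoto diffusion matrix. -/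
/-!
Under the constraints on the coefficients, `A_SKT(u)` is the nonnegative combination
`c10 • 1 + (c11 - c12) • Askt 0 1 1 0 1 0 u + c12 • Askt 0 0 1 1 1 1 u`. For each of the two
extreme matrices, `zᵀ H(u) A z` is a sum of squares with weights positive on `D`, while
`zᵀ H(u) z = z₁²/u₁ + z₂²/u₂ + (z₁ + z₂)²/u₃`; hence `ε = c10` works.
-/

open Matrix

noncomputable def Askt (c10 c20 c11 c12 c21 c22 u1 u2 : ℝ) : Matrix (Fin 2) (Fin 2) ℝ :=
  !![c10 + 2*c11*u1 + c12*u2, c12*u1; c21*u2, c20 + c21*u1 + 2*c22*u2]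

noncomputable def entropyForm (u1 u2 : ℝ) (A : Matrix (Fin 2) (Fin 2) ℝ) (z : Fin 2 → ℝ) : ℝ :=
  z ⬝ᵥ (Hmat u1 u2 * A) *ᵥ z

section entropyForm

variable (u1 u2 : ℝ) (z : Fin 2 → ℝ)

lemma entropyForm_add (A B : Matrix (Fin 2) (Fin 2) ℝ) :
    entropyForm u1 u2 (A + B) z = entropyForm u1 u2 A z + entropyForm u1 u2 B z := by
  simp only [entropyForm, Matrix.mul_add, add_mulVec, dotProduct_add]

lemma entropyForm_smul (c : ℝ) (A : Matrix (Fin 2) (Fin 2) ℝ) :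
    entropyForm u1 u2 (c • A) z = c * entropyForm u1 u2 A z := by
  simp only [entropyForm, Matrix.mul_smul, smul_mulVec, dotProduct_smul, smul_eq_mul]

lemma entropyForm_one :
    entropyForm u1 u2 1 z = z 0 ^ 2 / u1 + z 1 ^ 2 / u2 + (z 0 + z 1) ^ 2 / (1 - u1 - u2) := by
  simp [entropyForm, Hmat, mulVec, dotProduct, Fin.sum_univ_two]
  ring

variable {u1 u2}

lemma entropyForm_Askt_excess (h1 : u1 ≠ 0) (h2 : u2 ≠ 0) (h3 : 1 - u1 - u2 ≠ 0) :
    entropyForm u1 u2 (Askt 0 1 1 0 1 0 u1 u2) z =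
      z 0 ^ 2 + (z 0 + z 1) ^ 2 + (1 + u1) * z 1 ^ 2 / u2
        + (2 * u1 + u2) * (z 0 + z 1) ^ 2 / (1 - u1 - u2) := by
  simp [entropyForm, Hmat, Askt, mul_apply, mulVec, dotProduct, Fin.sum_univ_two]
  field_simp
  ring

lemma entropyForm_Askt_uniform (h1 : u1 ≠ 0) (h2 : u2 ≠ 0) (h3 : 1 - u1 - u2 ≠ 0) :
    entropyForm u1 u2 (Askt 0 0 1 1 1 1 u1 u2) z =
      z 0 ^ 2 + z 1 ^ 2 + (z 0 + z 1) ^ 2 + u2 * z 0 ^ 2 / u1 + u1 * z 1 ^ 2 / u2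
        + 2 * (u1 + u2) * (z 0 + z 1) ^ 2 / (1 - u1 - u2) := by
  simp [entropyForm, Hmat, Askt, mul_apply, mulVec, dotProduct, Fin.sum_univ_two]
  field_simp
  ring

lemma entropyForm_Askt_excess_nonneg (h1 : 0 < u1) (h2 : 0 < u2) (h3 : 0 < 1 - u1 - u2) :
    0 ≤ entropyForm u1 u2 (Askt 0 1 1 0 1 0 u1 u2) z := by
  rw [entropyForm_Askt_excess z h1.ne' h2.ne' h3.ne']
  positivity

lemma entropyForm_Askt_uniform_nonneg (h1 : 0 < u1) (h2 : 0 < u2) (h3 : 0 < 1 - u1 - u2) :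
    0 ≤ entropyForm u1 u2 (Askt 0 0 1 1 1 1 u1 u2) z := by
  rw [entropyForm_Askt_uniform z h1.ne' h2.ne' h3.ne']
  positivity

end entropyForm

lemma Askt_eq_combination {c10 c20 c11 c12 c21 c22 : ℝ} (u1 u2 : ℝ)
    (e1 : c21 = c11) (e2 : c22 = c12) (e3 : c20 - c10 = c11 - c22) :
    Askt c10 c20 c11 c12 c21 c22 u1 u2 =
      c10 • 1 + (c11 - c12) • Askt 0 1 1 0 1 0 u1 u2 + c12 • Askt 0 0 1 1 1 1 u1 u2 := by
  subst e1 e2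
  ext i j
  fin_cases i <;> fin_cases j <;> simp [Askt] <;> linarith

theorem stmt7_general (c10 c20 c11 c12 c21 c22 : ℝ)
    (h10 : 0 < c10) (h12 : 0 ≤ c12)
    (e1 : c21 = c11) (e2 : c22 = c12) (e3 : c20 - c10 = c11 - c22) (e4 : 0 ≤ c11 - c22) :
    ∃ ε > (0:ℝ), ∀ u1 u2 : ℝ, 0 < u1 → 0 < u2 → u1 + u2 < 1 → ∀ z : Fin 2 → ℝ,
      ε * ((z 0)^2 / u1 + (z 1)^2 / u2) ≤
        z ⬝ᵥ ((Hmat u1 u2 * Askt c10 c20 c11 c12 c21 c22 u1 u2).mulVec z) := by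
  refine ⟨c10, h10, fun u1 u2 h1 h2 hu z => ?_⟩
  have h3 : 0 < 1 - u1 - u2 := by linarith
  change _ ≤ entropyForm u1 u2 _ z
  rw [Askt_eq_combination u1 u2 e1 e2 e3, entropyForm_add, entropyForm_add, entropyForm_smul,
    entropyForm_smul, entropyForm_smul, entropyForm_one]
  have hexcess := mul_nonneg (e2 ▸ e4) (entropyForm_Askt_excess_nonneg z h1 h2 h3)
  have huniform := mul_nonneg h12 (entropyForm_Askt_uniform_nonneg z h1 h2 h3)
  have hsum := mul_nonneg h10.le (by positivity : 0 ≤ (z 0 + z 1) ^ 2 / (1 - u1 - u2))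
  linarith

/-- Under the stated conditions on the SKT coefficients, there is `ε > 0` with
`zᵀH(u)A_SKT(u)z ≥ ε(z₁²/u₁ + z₂²/u₂)` for all `u ∈ D` and `z ∈ ℝ²`. -/
theorem stmt7 (c10 c20 c11 c12 c21 c22 : ℝ)
    (h10 : 0 < c10) (h20 : 0 < c20) (h11 : 0 ≤ c11) (h12 : 0 ≤ c12)
    (h21 : 0 ≤ c21) (h22 : 0 ≤ c22)
    (e1 : c21 = c11) (e2 : c22 = c12) (e3 : c20 - c10 = c11 - c22) (e4 : 0 ≤ c11 - c22) :
    ∃ ε > (0:ℝ), ∀ u1 u2 : ℝ, 0 < u1 → 0 < u2 → u1 + u2 < 1 → ∀ z : Fin 2 → ℝ,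
      ε * ((z 0)^2 / u1 + (z 1)^2 / u2) ≤
        z ⬝ᵥ ((Hmat u1 u2 * Askt c10 c20 c11 c12 c21 c22 u1 u2).mulVec z) :=
  stmt7_general c10 c20 c11 c12 c21 c22 h10 h12 e1 e2 e3 e4
end

section
/- Let U = (U1, U2) ∈ D, set U3 = 1 − U1 − U2, let b10, b20 ≥ 0, and assume b_{i0} = b_{i1}U1 + b_{i2}U2 with b10 = b12, b20 = b21 and b11, b22 given so that f_i(u) = (b_{i0} − b_{i1}u1 − b_{i2}u2)u_i. Then for every u ∈ D, with u3 = 1 − u1 − u2: (i) f_i(u) = −b_{i0} u_i U3 (u_i/U_i − u3/U3) for i = 1,2; and (ii) Σ_{i=1,2} f_i(u)·(log(u_i/U_i) − log(u3/U3)) = −Σ_{i=1,2} b_{i0} u_i U3 (u_i/U_i − u3/U3)(log(u_i/U_i) − log(u3/U3)) ≤ 0. -/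
/-!
Eliminating `b_{i1}` (resp. `b_{i2}`) through the steady-state relation shows that each source
term is `-b_{i0} u_i U₃ (u_i/U_i - u₃/U₃)`. Since `log` is increasing, `(x - y)(log x - log y) ≥ 0`,
so every summand of `Σ fᵢ(u) ∂ᵢh(u|U)` is nonpositive.
-/

open Real

lemma sub_mul_log_sub_log_nonneg {x y : ℝ} (hx : 0 < x) (hy : 0 < y) :
    0 ≤ (x - y) * (log x - log y) :=
  (monotoneOn_id.monovaryOn strictMonoOn_log.monotoneOn).sub_mul_sub_nonneg
    (Set.mem_Ioi.2 hy) (Set.mem_Ioi.2 hx)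

/-- `(U, V, W)` and `(u, v, w)` play the roles of `(U_i, U_j, U₃)` and `(u_i, u_j, u₃)`. -/
lemma lotkaVolterra_source_eq {b₀ b₁ U V W u v w : ℝ} (hU : U ≠ 0) (hW : W ≠ 0)
    (hUVW : U + V + W = 1) (huvw : u + v + w = 1) (hb : b₀ = b₁ * U + b₀ * V) :
    (b₀ - b₁ * u - b₀ * v) * u = -b₀ * u * W * (u / U - w / W) := by
  have hb₁ : b₁ = b₀ * (1 - V) / U := by
    field_simp
    linear_combination -hb
  obtain rfl : W = 1 - U - V := by linarith
  obtain rfl : w = 1 - u - v := by linarith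
  rw [hb₁]
  field_simp
  ring

lemma mul_sub_mul_log_sub_log_nonneg {c x y : ℝ} (hc : 0 ≤ c) (hx : 0 < x) (hy : 0 < y) :
    0 ≤ c * (x - y) * (log x - log y) := by
  rw [mul_assoc]
  exact mul_nonneg hc (sub_mul_log_sub_log_nonneg hx hy)

/-- Rewriting of the Lotka–Volterra source terms around the steady state `U ∈ D` under
`b_{i0} = b_{i1}U₁ + b_{i2}U₂`, `b10 = b12`, `b20 = b21`, and nonpositivity of
`Σᵢ fᵢ(u) ∂ᵤᵢ h(u|U)`. -/
theorem stmt10 (U1 U2 b10 b11 b12 b20 b21 b22 : ℝ)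
    (hU1 : 0 < U1) (hU2 : 0 < U2) (hU : U1 + U2 < 1)
    (hb10 : 0 ≤ b10) (hb20 : 0 ≤ b20)
    (h1 : b10 = b11 * U1 + b12 * U2) (h2 : b20 = b21 * U1 + b22 * U2)
    (e1 : b10 = b12) (e2 : b20 = b21) :
    ∀ u1 u2 : ℝ, 0 < u1 → 0 < u2 → u1 + u2 < 1 →
      ((b10 - b11*u1 - b12*u2) * u1 =
        -b10 * u1 * (1 - U1 - U2) * (u1/U1 - (1-u1-u2)/(1-U1-U2))) ∧
      ((b20 - b21*u1 - b22*u2) * u2 =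
        -b20 * u2 * (1 - U1 - U2) * (u2/U2 - (1-u1-u2)/(1-U1-U2))) ∧
      ((b10 - b11*u1 - b12*u2) * u1 * (log (u1/U1) - log ((1-u1-u2)/(1-U1-U2)))
        + (b20 - b21*u1 - b22*u2) * u2 * (log (u2/U2) - log ((1-u1-u2)/(1-U1-U2)))
       = -(b10 * u1 * (1 - U1 - U2) * (u1/U1 - (1-u1-u2)/(1-U1-U2))
             * (log (u1/U1) - log ((1-u1-u2)/(1-U1-U2)))
           + b20 * u2 * (1 - U1 - U2) * (u2/U2 - (1-u1-u2)/(1-U1-U2))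
             * (log (u2/U2) - log ((1-u1-u2)/(1-U1-U2))))) ∧
      ((b10 - b11*u1 - b12*u2) * u1 * (log (u1/U1) - log ((1-u1-u2)/(1-U1-U2)))
        + (b20 - b21*u1 - b22*u2) * u2 * (log (u2/U2) - log ((1-u1-u2)/(1-U1-U2)))
       ≤ 0) := by
  intro u1 u2 hu1 hu2 hu
  subst e1 e2
  have hU3 : 0 < 1 - U1 - U2 := by linarith
  have hu3 : 0 < 1 - u1 - u2 := by linarith
  have f1 : (b10 - b11*u1 - b10*u2) * u1 =
      -b10 * u1 * (1 - U1 - U2) * (u1/U1 - (1-u1-u2)/(1-U1-U2)) :=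
    lotkaVolterra_source_eq (V := U2) (v := u2) hU1.ne' hU3.ne' (by ring) (by ring) h1
  have f2 : (b20 - b20*u1 - b22*u2) * u2 =
      -b20 * u2 * (1 - U1 - U2) * (u2/U2 - (1-u1-u2)/(1-U1-U2)) := by
    rw [sub_right_comm]
    exact lotkaVolterra_source_eq (V := U1) (v := u1) hU2.ne' hU3.ne' (by ring) (by ring)
      (by linear_combination h2)
  have entropy_production :
      (b10 - b11*u1 - b10*u2) * u1 * (log (u1/U1) - log ((1-u1-u2)/(1-U1-U2)))
        + (b20 - b20*u1 - b22*u2) * u2 * (log (u2/U2) - log ((1-u1-u2)/(1-U1-U2)))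
      = -(b10 * u1 * (1 - U1 - U2) * (u1/U1 - (1-u1-u2)/(1-U1-U2))
            * (log (u1/U1) - log ((1-u1-u2)/(1-U1-U2)))
          + b20 * u2 * (1 - U1 - U2) * (u2/U2 - (1-u1-u2)/(1-U1-U2))
            * (log (u2/U2) - log ((1-u1-u2)/(1-U1-U2)))) := by
    rw [f1, f2]; ring
  refine ⟨f1, f2, entropy_production, entropy_production ▸ neg_nonpos.2 (add_nonneg ?_ ?_)⟩
  · exact mul_sub_mul_log_sub_log_nonneg (by positivity) (by positivity) (by positivity)
  · exact mul_sub_mul_log_sub_log_nonneg (by positivity) (by positivity) (by positivity)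
end

section
/- Let α11, α22, β11, β12, γ22 be real numbers satisfying α11 > 0, α22 > 0, β12 < α11 + min{β11, γ22}, α11 + β11 ≥ 0, α22 + γ22 ≥ 0, let U = (U1,U2) ∈ D, and assume the discriminant conditions (α11+β11)(α11+β11−β12) − 4γ21²·(U2/U1) > 0 and (α22+γ22)(α22+γ22−γ21) − 4β12²·(U1/U2) > 0, where γ21 = α22 − α11 + β12. Then there exist ε0 > 0 and c > 0 such that for all 0 < ε < ε0, all u ∈ D, and all z = (z1,z2) ∈ ℝ², zᵀK_ε(u)A(u)z ≥ c(z1²/(u1+ε)² + z2²/(u2+ε)²), where K_ε(u) is the diagonal matrix with entries (K_ε(u))_{ii} = (U_i+ε)/(u_i+ε)². -/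
/-!
With `x = z₁/(u₁+ε)` and `y = z₂/(u₂+ε)` the form `zᵀ K_ε(u) A(u) z` becomes
`p x² + (t₁ + t₂) x y + r y²` with `p = (U₁+ε) A₁₁`, `r = (U₂+ε) A₂₂` and cross terms
`t₁ = (U₁+ε) β₁₂ u₁ (u₂+ε)/(u₁+ε)`, `t₂ = (U₂+ε) γ₂₁ u₂ (u₁+ε)/(u₂+ε)`; it is coercive as soon as
`4 tᵢ² ≤ p r` and `p, r` are bounded below. The diagonal entries are affine on `D` and positive
at its vertices, so bounding them by their vertex values reduces `4 tᵢ² ≤ p r` to an inequality in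
one variable `u ∈ [0, 1]`. At `ε = 0` the discriminant conditions make it hold with a margin that is
uniform in `u`, so it survives small `ε > 0`.
-/

open Matrix

theorem quadratic_form_nonneg {p q r x y : ℝ} (hp : 0 ≤ p) (hr : 0 ≤ r) (hq : q ^ 2 ≤ 4 * p * r) :
    0 ≤ p * x ^ 2 + q * x * y + r * y ^ 2 := by
  rcases hp.eq_or_lt with rfl | hp
  · obtain rfl : q = 0 := by nlinarith
    nlinarith
  · nlinarith [sq_nonneg (2 * p * x + q * y), mul_nonneg hr (sq_nonneg y)]

theorem coercive_of_sq_cross_le {c p r t₁ t₂ x y : ℝ} (hc : 0 ≤ c) (hp : 2 * c ≤ p)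
    (hr : 2 * c ≤ r) (h₁ : 4 * t₁ ^ 2 ≤ p * r) (h₂ : 4 * t₂ ^ 2 ≤ p * r) :
    c * (x ^ 2 + y ^ 2) ≤ p * x ^ 2 + (t₁ + t₂) * x * y + r * y ^ 2 := by
  have hq : (t₁ + t₂) ^ 2 ≤ 4 * (p - c) * (r - c) := by
    nlinarith [sq_nonneg (t₁ - t₂), mul_nonneg hc (by linarith : 0 ≤ p - 2 * c),
      mul_nonneg hc (by linarith : 0 ≤ r - 2 * c),
      mul_nonneg (by linarith : 0 ≤ p - 2 * c) (by linarith : 0 ≤ r - 2 * c)]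
  nlinarith [quadratic_form_nonneg (x := x) (y := y) (by linarith : 0 ≤ p - c)
    (by linarith : 0 ≤ r - c) hq]

theorem dotProduct_diagonal_mul_mulVec {V₁ V₂ w₁ w₂ : ℝ} (hw₁ : w₁ ≠ 0) (hw₂ : w₂ ≠ 0)
    (M : Matrix (Fin 2) (Fin 2) ℝ) (z : Fin 2 → ℝ) :
    z ⬝ᵥ ((!![V₁ / w₁ ^ 2, 0; 0, V₂ / w₂ ^ 2] * M) *ᵥ z) =
      V₁ * M 0 0 * (z 0 / w₁) ^ 2 + (V₁ * M 0 1 * w₂ / w₁ + V₂ * M 1 0 * w₁ / w₂) *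
        (z 0 / w₁) * (z 1 / w₂) + V₂ * M 1 1 * (z 1 / w₂) ^ 2 := by
  rw [M.eta_fin_two]
  simp [mulVec, dotProduct, Fin.sum_univ_two]
  field_simp
  ring

theorem sq_cross_le {V₁ V₂ β u v w A B : ℝ} (hV₁ : 0 ≤ V₁) (hu : 0 ≤ u) (huv : u ≤ v)
    (h : 4 * V₁ * β ^ 2 * w ^ 2 ≤ V₂ * (A * B)) :
    4 * (V₁ * (β * u) * w / v) ^ 2 ≤ (V₁ * A) * (V₂ * B) := by
  have hv : 0 ≤ v := hu.trans huv
  have hs : (u / v) ^ 2 ≤ 1 := pow_le_one₀ (div_nonneg hu hv) (div_le_one_of_le₀ huv hv)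
  calc 4 * (V₁ * (β * u) * w / v) ^ 2 = V₁ * (4 * V₁ * β ^ 2 * w ^ 2) * (u / v) ^ 2 := by ring
    _ ≤ V₁ * (4 * V₁ * β ^ 2 * w ^ 2) := by
        apply mul_le_of_le_one_right (by positivity) hs
    _ ≤ (V₁ * A) * (V₂ * B) := by nlinarith [mul_le_mul_of_nonneg_left h hV₁]

theorem exists_cross_bound_uniform {V W β m₁ m₂ k₁ k₂ : ℝ} (hV : 0 ≤ V) (hW : 0 < W)
    (hm₁ : 0 < m₁) (hm₂ : 0 < m₂) (hk₁ : 0 ≤ k₁) (hk₂ : 0 ≤ k₂)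
    (hdisc : 4 * β ^ 2 * V < W * (k₁ * k₂)) :
    ∃ ε₀ > 0, ∀ ε, 0 < ε → ε < ε₀ → ∀ u A B, 0 ≤ u → u ≤ 1 →
      m₁ * (1 - u) + k₁ * u ≤ A → m₂ * (1 - u) + k₂ * u ≤ B →
      4 * (V + ε) * β ^ 2 * (u + ε) ^ 2 ≤ (W + ε) * (A * B) := by
  set δ := min (W * (k₁ * k₂) - 4 * β ^ 2 * V) (W * (m₁ * m₂))
  have hδ : 0 < δ := lt_min (by linarith) (by positivity)
  set C := 4 * β ^ 2 * (3 * V + 4)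
  refine ⟨min 1 (δ / (2 * C + 1)), lt_min one_pos (by positivity), ?_⟩
  intro ε hε hε₀ u A B hu₀ hu₁ hA hB
  have hε₁ : ε ≤ 1 := hε₀.le.trans (min_le_left _ _)
  have hεδ : C * ε ≤ δ / 2 := by
    have := (lt_div_iff₀ (by positivity : (0:ℝ) < 2 * C + 1)).1 (hε₀.trans_le (min_le_right _ _))
    nlinarith
  have hL₁ : 0 ≤ m₁ * (1 - u) + k₁ * u := by nlinarith
  have hL₂ : 0 ≤ m₂ * (1 - u) + k₂ * u := by nlinarith
  have hAB : m₁ * m₂ * (1 - u) ^ 2 + k₁ * k₂ * u ^ 2 ≤ A * B := by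
    refine le_trans ?_ (mul_le_mul hA hB hL₂ (hL₁.trans hA))
    nlinarith [mul_nonneg (mul_nonneg hu₀ (by linarith : 0 ≤ 1 - u))
      (add_nonneg (mul_nonneg hm₁.le hk₂) (mul_nonneg hm₂.le hk₁))]
  -- The margin at `ε = 0` is uniform in `u` because `u² + (1 - u)² ≥ 1/2`.
  have hbase : 4 * V * β ^ 2 * u ^ 2 + δ / 2 ≤ W * (m₁ * m₂ * (1 - u) ^ 2 + k₁ * k₂ * u ^ 2) := by
    nlinarith [mul_le_mul_of_nonneg_right (min_le_left _ _ : δ ≤ _) (sq_nonneg u),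
      mul_le_mul_of_nonneg_right (min_le_right _ _ : δ ≤ _) (sq_nonneg (1 - u)),
      mul_nonneg hδ.le (sq_nonneg (2 * u - 1))]
  have hpert : 4 * (V + ε) * β ^ 2 * (u + ε) ^ 2 ≤ 4 * V * β ^ 2 * u ^ 2 + C * ε := by
    have : (V + ε) * (u + ε) ^ 2 ≤ V * u ^ 2 + (3 * V + 4) * ε := by
      nlinarith [mul_nonneg hV hε.le, mul_nonneg (mul_nonneg hV hε.le) (by linarith : 0 ≤ 1 - u),
        mul_nonneg (mul_nonneg hV hε.le) (by linarith : 0 ≤ 1 - ε),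
        mul_nonneg hε.le (by nlinarith : 0 ≤ 4 - (u + ε) ^ 2)]
    nlinarith [mul_le_mul_of_nonneg_left this (by positivity : (0:ℝ) ≤ 4 * β ^ 2)]
  nlinarith [mul_le_mul_of_nonneg_left hAB hW.le, mul_nonneg hε.le ((add_nonneg
    (by positivity) (by positivity)).trans hAB : (0:ℝ) ≤ A * B)]

section Amat

variable {a11 a22 b11 b12 g22 u1 u2 m : ℝ}

theorem Amat_zero_one : Amat a11 a22 b11 b12 g22 u1 u2 0 1 = b12 * u1 := by
  simp [Amat]

theorem Amat_one_zero : Amat a11 a22 b11 b12 g22 u1 u2 1 0 = (a22 - a11 + b12) * u2 := by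
  simp [Amat]

theorem Amat_zero_zero_ge (hm : m ≤ min a11 (min (a11 + b11) (a11 + g22 - b12)))
    (hu1 : 0 ≤ u1) (hu2 : 0 ≤ u2) (hu : u1 + u2 ≤ 1) :
    m ≤ Amat a11 a22 b11 b12 g22 u1 u2 0 0 ∧
      m * (1 - u1) + (a11 + b11) * u1 ≤ Amat a11 a22 b11 b12 g22 u1 u2 0 0 ∧
      m * (1 - u2) + (a11 + g22 - b12) * u2 ≤ Amat a11 a22 b11 b12 g22 u1 u2 0 0 := by
  simp only [le_min_iff] at hm
  obtain ⟨h₀, h₁, h₂⟩ := hm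
  have hw : 0 ≤ 1 - u1 - u2 := by linarith
  simp only [Amat, of_apply, cons_val', cons_val_zero, empty_val', cons_val_fin_one]
  refine ⟨?_, ?_, ?_⟩ <;>
    nlinarith [mul_le_mul_of_nonneg_right h₀ hw, mul_le_mul_of_nonneg_right h₁ hu1,
      mul_le_mul_of_nonneg_right h₂ hu2]

theorem Amat_one_one_ge (hm : m ≤ min a22 (min (a11 + b11 - b12) (a22 + g22)))
    (hu1 : 0 ≤ u1) (hu2 : 0 ≤ u2) (hu : u1 + u2 ≤ 1) :
    m ≤ Amat a11 a22 b11 b12 g22 u1 u2 1 1 ∧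
      m * (1 - u1) + (a11 + b11 - b12) * u1 ≤ Amat a11 a22 b11 b12 g22 u1 u2 1 1 ∧
      m * (1 - u2) + (a22 + g22) * u2 ≤ Amat a11 a22 b11 b12 g22 u1 u2 1 1 := by
  simp only [le_min_iff] at hm
  obtain ⟨h₀, h₁, h₂⟩ := hm
  have hw : 0 ≤ 1 - u1 - u2 := by linarith
  simp only [Amat, of_apply, cons_val', cons_val_one, empty_val', cons_val_fin_one]
  refine ⟨?_, ?_, ?_⟩ <;>
    nlinarith [mul_le_mul_of_nonneg_right h₀ hw, mul_le_mul_of_nonneg_right h₁ hu1,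
      mul_le_mul_of_nonneg_right h₂ hu2]

end Amat

theorem mul_lt_of_pos_sub_mul_div {U V P Q : ℝ} (hU : 0 < U) (h : 0 < P - Q * (V / U)) :
    Q * V < U * P := by
  have := mul_pos h hU
  rwa [sub_mul, mul_assoc, div_mul_cancel₀ _ hU.ne', sub_pos, mul_comm P] at this

theorem stmt11_general (a11 a22 b11 b12 g22 U1 U2 : ℝ)
    (h1 : 0 < a11) (h2 : 0 < a22) (h3 : b12 < a11 + min b11 g22)
    (hU1 : 0 < U1) (hU2 : 0 < U2)
    (hd1 : 0 < (a11+b11)*(a11+b11-b12) - 4*(a22-a11+b12)^2*(U2/U1))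
    (hd2 : 0 < (a22+g22)*(a22+g22-(a22-a11+b12)) - 4*b12^2*(U1/U2)) :
    ∃ ε0 > (0:ℝ), ∃ c > (0:ℝ), ∀ ε : ℝ, 0 < ε → ε < ε0 →
      ∀ u1 u2 : ℝ, 0 < u1 → 0 < u2 → u1 + u2 < 1 → ∀ z : Fin 2 → ℝ,
        c * ((z 0)^2/(u1+ε)^2 + (z 1)^2/(u2+ε)^2) ≤
          z ⬝ᵥ ((!![(U1+ε)/(u1+ε)^2, 0; 0, (U2+ε)/(u2+ε)^2]
            * Amat a11 a22 b11 b12 g22 u1 u2).mulVec z) := by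
  have hk₁ : 0 < a11 + b11 - b12 := by linarith [min_le_left b11 g22]
  have hk₂ : 0 < a11 + g22 - b12 := by linarith [min_le_right b11 g22]
  have hdisc₁ : 4 * (a22 - a11 + b12) ^ 2 * U2 < U1 * ((a11 + b11 - b12) * (a11 + b11)) := by
    linarith [mul_lt_of_pos_sub_mul_div hU1 hd1]
  have hdisc₂ : 4 * b12 ^ 2 * U1 < U2 * ((a11 + g22 - b12) * (a22 + g22)) := by
    linarith [mul_lt_of_pos_sub_mul_div hU2 hd2]
  -- The discriminant conditions force the remaining vertex values to be positive.
  have hk₃ : 0 < a11 + b11 := pos_of_mul_pos_right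
    (pos_of_mul_pos_right ((by positivity : (0:ℝ) ≤ _).trans_lt hdisc₁) hU1.le) hk₁.le
  have hk₄ : 0 < a22 + g22 := pos_of_mul_pos_right
    (pos_of_mul_pos_right ((by positivity : (0:ℝ) ≤ _).trans_lt hdisc₂) hU2.le) hk₂.le
  set m₁ := min a11 (min (a11 + b11) (a11 + g22 - b12))
  set m₂ := min a22 (min (a11 + b11 - b12) (a22 + g22))
  have hm₁ : 0 < m₁ := lt_min h1 (lt_min hk₃ hk₂)
  have hm₂ : 0 < m₂ := lt_min h2 (lt_min hk₁ hk₄)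
  obtain ⟨ε₁, hε₁, H₁⟩ := exists_cross_bound_uniform hU1.le hU2 hm₁ hm₂ hk₂.le hk₄.le hdisc₂
  obtain ⟨ε₂, hε₂, H₂⟩ := exists_cross_bound_uniform hU2.le hU1 hm₂ hm₁ hk₁.le hk₃.le hdisc₁
  refine ⟨min ε₁ ε₂, lt_min hε₁ hε₂, min (U1 * m₁) (U2 * m₂) / 2, by positivity, ?_⟩
  intro ε hε hεlt u1 u2 hu1 hu2 hu z
  obtain ⟨hP, hP₁, hP₂⟩ := Amat_zero_zero_ge le_rfl hu1.le hu2.le hu.le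
  obtain ⟨hR, hR₁, hR₂⟩ := Amat_one_one_ge le_rfl hu1.le hu2.le hu.le
  rw [dotProduct_diagonal_mul_mulVec (by positivity) (by positivity), ← div_pow, ← div_pow,
    Amat_zero_one, Amat_one_zero]
  refine coercive_of_sq_cross_le (by positivity) ?_ ?_ ?_ ?_
  · nlinarith [min_le_left (U1 * m₁) (U2 * m₂)]
  · nlinarith [min_le_right (U1 * m₁) (U2 * m₂)]
  · exact sq_cross_le (by positivity) hu1.le (by linarith)
      (H₁ ε hε (hεlt.trans_le (min_le_left _ _)) u2 _ _ hu2.le (by linarith) hP₂ hR₂)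
  · exact (sq_cross_le (by positivity) hu2.le (by linarith)
      (H₂ ε hε (hεlt.trans_le (min_le_right _ _)) u1 _ _ hu1.le (by linarith) hR₁ hP₁)).trans_eq
      (mul_comm _ _)

/-- Under the parameter and discriminant conditions, there exist `ε₀ > 0` and `c > 0`
such that for all `0 < ε < ε₀`, `u ∈ D`, `z ∈ ℝ²`,
`zᵀK_ε(u)A(u)z ≥ c(z₁²/(u₁+ε)² + z₂²/(u₂+ε)²)`. -/
theorem stmt11 (a11 a22 b11 b12 g22 U1 U2 : ℝ)
    (h1 : 0 < a11) (h2 : 0 < a22) (h3 : b12 < a11 + min b11 g22)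
    (h4 : 0 ≤ a11 + b11) (h5 : 0 ≤ a22 + g22)
    (hU1 : 0 < U1) (hU2 : 0 < U2) (hU : U1 + U2 < 1)
    (hd1 : 0 < (a11+b11)*(a11+b11-b12) - 4*(a22-a11+b12)^2*(U2/U1))
    (hd2 : 0 < (a22+g22)*(a22+g22-(a22-a11+b12)) - 4*b12^2*(U1/U2)) :
    ∃ ε0 > (0:ℝ), ∃ c > (0:ℝ), ∀ ε : ℝ, 0 < ε → ε < ε0 →
      ∀ u1 u2 : ℝ, 0 < u1 → 0 < u2 → u1 + u2 < 1 → ∀ z : Fin 2 → ℝ,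
        c * ((z 0)^2/(u1+ε)^2 + (z 1)^2/(u2+ε)^2) ≤
          z ⬝ᵥ ((!![(U1+ε)/(u1+ε)^2, 0; 0, (U2+ε)/(u2+ε)^2]
            * Amat a11 a22 b11 b12 g22 u1 u2).mulVec z) :=
  stmt11_general a11 a22 b11 b12 g22 U1 U2 h1 h2 h3 hU1 hU2 hd1 hd2
end

section
/- Fix ū = (ū1, ū2) ∈ D and define the relative entropy density h(u|ū) = Σ_{k=1}^3 ū_k((u_k/ū_k)log(u_k/ū_k) − u_k/ū_k + 1) for u ∈ D, where u3 = 1−u1−u2, ū3 = 1−ū1−ū2 (so ∂h/∂u_i (u|ū) = log(u_i/ū_i) − log(u3/ū_3)). Let g_1, g_2 be continuous real-valued functions on the closed triangle {u1 ≥ 0, u2 ≥ 0, u1+u2 ≤ 1}, and suppose there is ε > 0 such that g_i(u) ≤ 0 for i = 1,2 whenever 1 − ε < u1 + u2 ≤ 1. Set f_i(u) = u_i g_i(u). Then there exists a constant c > 0 such that Σ_{i=1,2} f_i(u)·(log(u_i/ū_i) − log(u3/ū_3)) ≤ c for every u ∈ D. -/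
open Real

/-
Near the edge `u₃ = 0` the factor `log (u₃ / ū₃)` blows up, but there it is negative and the
`gᵢ` are nonpositive, so `-uᵢ gᵢ log (u₃ / ū₃) ≤ 0`; away from that edge it is bounded. The
remaining factors are bounded because `x log x` is bounded on `[0, 1]` and the `gᵢ` are
continuous on the compact triangle.
-/

lemma isCompact_triangle : IsCompact {p : ℝ × ℝ | 0 ≤ p.1 ∧ 0 ≤ p.2 ∧ p.1 + p.2 ≤ 1} := by
  refine (isCompact_Icc.prod isCompact_Icc : IsCompact (Set.Icc (0 : ℝ) 1 ×ˢ Set.Icc (0 : ℝ) 1))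
    |>.of_isClosed_subset ?_ ?_
  · exact (isClosed_le continuous_const continuous_fst).inter
      ((isClosed_le continuous_const continuous_snd).inter
        (isClosed_le (continuous_fst.add continuous_snd) continuous_const))
  · rintro ⟨x, y⟩ ⟨hx, hy, hxy⟩
    exact ⟨⟨hx, by linarith⟩, hy, by linarith⟩

lemma abs_mul_log_le_one {x : ℝ} (hx0 : 0 ≤ x) (hx1 : x ≤ 1) : |x * log x| ≤ 1 :=
  abs_le.mpr ⟨by linarith [self_sub_one_le_mul_log hx0], by linarith [mul_log_nonpos hx0 hx1]⟩

lemma abs_mul_log_div_le {x a : ℝ} (hx0 : 0 ≤ x) (hx1 : x ≤ 1) (ha : a ≠ 0) :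
    |x * log (x / a)| ≤ 1 + |log a| := by
  rcases hx0.eq_or_lt with rfl | hx
  · rw [zero_mul, abs_zero]; positivity
  calc |x * log (x / a)| = |x * log x - x * log a| := by rw [log_div hx.ne' ha, mul_sub]
    _ ≤ |x * log x| + |x| * |log a| := by rw [← abs_mul]; exact abs_sub _ _
    _ ≤ 1 + 1 * |log a| := by
        gcongr
        · exact abs_mul_log_le_one hx0 hx1
        · exact abs_le.mpr ⟨by linarith, hx1⟩
    _ = 1 + |log a| := by ring

lemma abs_log_div_le {y a δ : ℝ} (hδ : 0 < δ) (hδy : δ ≤ y) (hy1 : y ≤ 1) (ha : a ≠ 0) :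
    |log (y / a)| ≤ |log δ| + |log a| := by
  have hy : 0 < y := hδ.trans_le hδy
  have hlog_y : |log y| ≤ |log δ| := by
    rw [abs_of_nonpos (log_nonpos hy.le hy1), abs_of_nonpos (log_nonpos hδ.le (hδy.trans hy1))]
    exact neg_le_neg (log_le_log hδ hδy)
  calc |log (y / a)| = |log y - log a| := by rw [log_div hy.ne' ha]
    _ ≤ |log y| + |log a| := abs_sub _ _
    _ ≤ |log δ| + |log a| := by gcongr

lemma mul_mul_sub_le {u g L L' M A B : ℝ} (hu0 : 0 ≤ u) (hu1 : u ≤ 1) (hg : |g| ≤ M)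
    (hL : |u * L| ≤ A) (hL' : |L'| ≤ B ∨ g ≤ 0 ∧ L' ≤ 0) (hB : 0 ≤ B) :
    u * g * (L - L') ≤ M * A + M * B := by
  have hM : 0 ≤ M := (abs_nonneg g).trans hg
  have hfirst : g * (u * L) ≤ M * A :=
    (le_abs_self _).trans (abs_mul g _ ▸ mul_le_mul hg hL (abs_nonneg _) hM)
  have hsecond : -(u * g * L') ≤ M * B := by
    rcases hL' with hL' | ⟨hg0, hL'0⟩
    · calc -(u * g * L') ≤ |u| * (|g| * |L'|) := by
            rw [← abs_mul, ← abs_mul, ← mul_assoc]; exact neg_le_abs _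
        _ ≤ 1 * (M * B) := by
            gcongr
            exact abs_le.mpr ⟨by linarith, hu1⟩
        _ = M * B := one_mul _
    · have : 0 ≤ u * g * L' := mul_nonneg_of_nonpos_of_nonpos
        (mul_nonpos_of_nonneg_of_nonpos hu0 hg0) hL'0
      nlinarith
  linarith

/-- If `g₁, g₂` are continuous on the closed triangle and nonpositive near `u₁+u₂ = 1`,
then `Σᵢ uᵢgᵢ(u) ∂ᵤᵢ h(u|ū)` is bounded above on `D`. -/
theorem stmt12 (ub1 ub2 : ℝ) (hub1 : 0 < ub1) (hub2 : 0 < ub2) (hub : ub1 + ub2 < 1)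
    (g1 g2 : ℝ × ℝ → ℝ)
    (hg1 : ContinuousOn g1 {p : ℝ × ℝ | 0 ≤ p.1 ∧ 0 ≤ p.2 ∧ p.1 + p.2 ≤ 1})
    (hg2 : ContinuousOn g2 {p : ℝ × ℝ | 0 ≤ p.1 ∧ 0 ≤ p.2 ∧ p.1 + p.2 ≤ 1})
    (ε : ℝ) (hε : 0 < ε)
    (hneg : ∀ p : ℝ × ℝ, 0 ≤ p.1 → 0 ≤ p.2 → 1 - ε < p.1 + p.2 → p.1 + p.2 ≤ 1 →
      g1 p ≤ 0 ∧ g2 p ≤ 0) :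
    ∃ c > (0:ℝ), ∀ u1 u2 : ℝ, 0 < u1 → 0 < u2 → u1 + u2 < 1 →
      u1 * g1 (u1, u2) * (log (u1/ub1) - log ((1-u1-u2)/(1-ub1-ub2)))
        + u2 * g2 (u1, u2) * (log (u2/ub2) - log ((1-u1-u2)/(1-ub1-ub2))) ≤ c := by
  obtain ⟨M1, hM1⟩ := isCompact_triangle.exists_bound_of_continuousOn hg1
  obtain ⟨M2, hM2⟩ := isCompact_triangle.exists_bound_of_continuousOn hg2
  have hub3 : 0 < 1 - ub1 - ub2 := by linarith
  have hδ : 0 < min ε (1 - ub1 - ub2) := lt_min hε hub3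
  set B := |log (min ε (1 - ub1 - ub2))| + |log (1 - ub1 - ub2)|
  set M := max M1 M2
  refine ⟨max 1 (M * (1 + |log ub1|) + M * (1 + |log ub2|) + 2 * (M * B)), lt_max_of_lt_left one_pos, ?_⟩
  intro u1 u2 h1 h2 h12
  have hmem : (u1, u2) ∈ {p : ℝ × ℝ | 0 ≤ p.1 ∧ 0 ≤ p.2 ∧ p.1 + p.2 ≤ 1} :=
    ⟨h1.le, h2.le, h12.le⟩
  have hg1M : |g1 (u1, u2)| ≤ M := (hM1 _ hmem).trans (le_max_left _ _)
  have hg2M : |g2 (u1, u2)| ≤ M := (hM2 _ hmem).trans (le_max_right _ _)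
  have hedge : |log ((1 - u1 - u2) / (1 - ub1 - ub2))| ≤ B ∨
      (g1 (u1, u2) ≤ 0 ∧ g2 (u1, u2) ≤ 0) ∧ log ((1 - u1 - u2) / (1 - ub1 - ub2)) ≤ 0 := by
    rcases le_or_gt (min ε (1 - ub1 - ub2)) (1 - u1 - u2) with hfar | hnear
    · exact .inl (abs_log_div_le hδ hfar (by linarith) hub3.ne')
    · refine .inr ⟨hneg _ h1.le h2.le ?_ h12.le, log_nonpos (div_pos (by linarith) hub3).le ?_⟩
      · linarith [min_le_left ε (1 - ub1 - ub2)]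
      · rw [div_le_one hub3]; linarith [min_le_right ε (1 - ub1 - ub2)]
  have hterm1 := mul_mul_sub_le h1.le (by linarith) hg1M (abs_mul_log_div_le h1.le (by linarith)
    hub1.ne') (hedge.imp_right fun h ↦ ⟨h.1.1, h.2⟩) (by positivity)
  have hterm2 := mul_mul_sub_le h2.le (by linarith) hg2M (abs_mul_log_div_le h2.le (by linarith)
    hub2.ne') (hedge.imp_right fun h ↦ ⟨h.1.2, h.2⟩) (by positivity)
  exact le_max_of_le_right (by linarith)
end

section
/- For k = 1,2,3 let φ_k : (0,1) → ℝ be C², convex, and satisfy φ_k''(s) → +∞ as s → 0+. Define h(u) = φ_1(u1) + φ_2(u2) + φ_3(u3) with u3 = 1 − u1 − u2, and let H(u) be the Hessian of h with respect to (u1,u2), i.e. H(u) = [[φ_1''(u1)+φ_3''(u3), φ_3''(u3)],[φ_3''(u3), φ_2''(u2)+φ_3''(u3)]]. Let A(u) be the general linear diffusion matrix with entries A_{ij}(u) = α_{ij} + β_{ij}u1 + γ_{ij}u2 (i,j = 1,2) with real coefficients. If zᵀH(u)A(u)z ≥ 0 for all z ∈ ℝ² and all u ∈ D, then α12 = α21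 = β21 = γ12 = 0, β12 = α11 − α22 + β11 − β22, and γ21 = α22 − α11 + γ22 − γ11. -/
open Matrix

/-- The general linear diffusion matrix `A_{ij}(u) = α_{ij} + β_{ij}u₁ + γ_{ij}u₂`. -/
noncomputable def AmatG (α11 α12 α21 α22 β11 β12 β21 β22 γ11 γ12 γ21 γ22 u1 u2 : ℝ) :
    Matrix (Fin 2) (Fin 2) ℝ :=
  !![α11 + β11*u1 + γ11*u2, α12 + β12*u1 + γ12*u2;
     α21 + β21*u1 + γ21*u2, α22 + β22*u1 + γ22*u2]

open Filter Topology Set Function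

/-!
The set of matrices `M` with `zᵀ M z ≥ 0` for all `z` is a closed cone. Let `u` approach a
boundary point of `D` along a path on which exactly one of `φ₁'', φ₂'', φ₃''` blows up. Dividing
`H(u)` by that blowing-up quantity, `H(u)` tends to `e₁e₁ᵀ`, `e₂e₂ᵀ` or `(1,1)(1,1)ᵀ`, so the
product of this rank-one matrix with the boundary value of `A` still has a nonnegative
quadratic form. By the discriminant criterion this forces `A₁₂ = 0` on `{u₁ = 0}`, `A₂₁ = 0` on
`{u₂ = 0}`, and equal column sums of `A` on `{u₃ = 0}`; as the entries of `A` are affine, two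
points on each edge give the six identities.
-/

variable {ι n : Type*} [Fintype n]

def QuadFormNonneg (M : Matrix n n ℝ) : Prop := ∀ z : n → ℝ, 0 ≤ z ⬝ᵥ M *ᵥ z

namespace QuadFormNonneg

theorem isClosed_setOf : IsClosed {M : Matrix n n ℝ | QuadFormNonneg M} := by
  simp only [QuadFormNonneg, ofPred_forall]
  exact isClosed_iInter fun z => isClosed_le continuous_const
    (continuous_const.dotProduct (continuous_id.matrix_mulVec continuous_const))

theorem smul {M : Matrix n n ℝ} (hM : QuadFormNonneg M) {r : ℝ} (hr : 0 ≤ r) :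
    QuadFormNonneg (r • M) := fun z => by
  rw [smul_mulVec, dotProduct_smul, smul_eq_mul]
  exact mul_nonneg hr (hM z)

theorem of_tendsto_inv_smul_mul {l : Filter ι} [l.NeBot] {r : ι → ℝ}
    {H A : ι → Matrix n n ℝ} {E A₀ : Matrix n n ℝ} (hr : ∀ᶠ t in l, 0 < r t)
    (hH : Tendsto (fun t => (r t)⁻¹ • H t) l (𝓝 E)) (hA : Tendsto A l (𝓝 A₀))
    (hHA : ∀ᶠ t in l, QuadFormNonneg (H t * A t)) : QuadFormNonneg (E * A₀) := by
  refine isClosed_setOf.mem_of_tendsto (hH.mul hA) ?_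
  filter_upwards [hr, hHA] with t hrt hHAt
  rw [smul_mul_assoc]
  exact hHAt.smul (inv_nonneg.mpr hrt.le)

theorem sq_add_le {M : Matrix (Fin 2) (Fin 2) ℝ} (hM : QuadFormNonneg M) :
    (M 0 1 + M 1 0) ^ 2 ≤ 4 * M 0 0 * M 1 1 := by
  have hquad : ∀ x : ℝ, 0 ≤ M 0 0 * (x * x) + (M 0 1 + M 1 0) * x + M 1 1 := fun x => by
    have h := hM ![x, 1]
    simp only [dotProduct, mulVec, Fin.sum_univ_two, cons_val_zero, cons_val_one,
      cons_val_fin_one, mul_one, one_mul] at h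
    linarith
  have h := discrim_le_zero hquad
  rw [discrim] at h
  linarith

end QuadFormNonneg

/-- The Hessian of `(u₁, u₂) ↦ φ₁ u₁ + φ₂ u₂ + φ₃ (1 - u₁ - u₂)`, where
`a = φ₁'' u₁`, `b = φ₂'' u₂`, `c = φ₃'' u₃`. -/
def simplexHessian (a b c : ℝ) : Matrix (Fin 2) (Fin 2) ℝ := !![a + c, c; c, b + c]

theorem simplexHessian_eq (a b c : ℝ) :
    simplexHessian a b c = a • !![1, 0; 0, 0] + b • !![0, 0; 0, 1] + c • !![1, 1; 1, 1] := by
  ext i j; fin_cases i <;> fin_cases j <;> simp [simplexHessian]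

theorem tendsto_inv_smul_simplexHessian {l : Filter ι} {r a b c : ι → ℝ} {a₀ b₀ c₀ : ℝ}
    (ha : Tendsto (fun t => a t / r t) l (𝓝 a₀)) (hb : Tendsto (fun t => b t / r t) l (𝓝 b₀))
    (hc : Tendsto (fun t => c t / r t) l (𝓝 c₀)) :
    Tendsto (fun t => (r t)⁻¹ • simplexHessian (a t) (b t) (c t)) l
      (𝓝 (simplexHessian a₀ b₀ c₀)) := by
  simp only [simplexHessian_eq, smul_add, smul_smul, ← div_eq_inv_mul]
  exact ((ha.smul_const _).add (hb.smul_const _)).add (hc.smul_const _)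

theorem tendsto_div_self_of_tendsto_atTop {l : Filter ι} {r : ι → ℝ} (hr : Tendsto r l atTop) :
    Tendsto (fun t => r t / r t) l (𝓝 1) :=
  tendsto_const_nhds.congr' <| (hr.eventually_gt_atTop 0).mono fun _ ht => (div_self ht.ne').symm

section Boundary

variable {f₁ f₂ f₃ : ℝ → ℝ} {A : ℝ → ℝ → Matrix (Fin 2) (Fin 2) ℝ}

theorem quadFormNonneg_simplexHessian_mul_of_tendsto (hA : Continuous (uncurry A))
    (hHA : ∀ u₁ u₂, 0 < u₁ → 0 < u₂ → u₁ + u₂ < 1 →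
      QuadFormNonneg (simplexHessian (f₁ u₁) (f₂ u₂) (f₃ (1 - u₁ - u₂)) * A u₁ u₂))
    {l : Filter ι} [l.NeBot] {u₁ u₂ r : ι → ℝ} {v₁ v₂ a₀ b₀ c₀ : ℝ}
    (hD : ∀ᶠ t in l, 0 < u₁ t ∧ 0 < u₂ t ∧ u₁ t + u₂ t < 1)
    (hu₁ : Tendsto u₁ l (𝓝 v₁)) (hu₂ : Tendsto u₂ l (𝓝 v₂)) (hr : ∀ᶠ t in l, 0 < r t)
    (ha : Tendsto (fun t => f₁ (u₁ t) / r t) l (𝓝 a₀))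
    (hb : Tendsto (fun t => f₂ (u₂ t) / r t) l (𝓝 b₀))
    (hc : Tendsto (fun t => f₃ (1 - u₁ t - u₂ t) / r t) l (𝓝 c₀)) :
    QuadFormNonneg (simplexHessian a₀ b₀ c₀ * A v₁ v₂) :=
  .of_tendsto_inv_smul_mul hr (tendsto_inv_smul_simplexHessian ha hb hc)
    ((hA.tendsto (v₁, v₂)).comp (hu₁.prodMk_nhds hu₂))
    (hD.mono fun _ ⟨h₁, h₂, h₁₂⟩ => hHA _ _ h₁ h₂ h₁₂)

theorem apply_zero_one_eq_zero_on_left_edge (h₁ : Tendsto f₁ (𝓝[>] 0) atTop)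
    (h₃ : ContinuousOn f₃ (Ioo 0 1)) (hA : Continuous (uncurry A))
    (hHA : ∀ u₁ u₂, 0 < u₁ → 0 < u₂ → u₁ + u₂ < 1 →
      QuadFormNonneg (simplexHessian (f₁ u₁) (f₂ u₂) (f₃ (1 - u₁ - u₂)) * A u₁ u₂))
    {v : ℝ} (hv₀ : 0 < v) (hv₁ : v < 1) : A 0 v 0 1 = 0 := by
  have hu₃ : Tendsto (fun t => 1 - t - v) (𝓝[>] 0) (𝓝 (1 - v)) :=
    (Continuous.tendsto' (by fun_prop) 0 _ (by ring)).mono_left nhdsWithin_le_nhds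
  have hlim : QuadFormNonneg (simplexHessian 1 0 0 * A 0 v) := by
    refine quadFormNonneg_simplexHessian_mul_of_tendsto hA hHA (u₁ := id) (u₂ := fun _ => v)
      ?_ (tendsto_id.mono_left nhdsWithin_le_nhds) tendsto_const_nhds (h₁.eventually_gt_atTop 0)
      (tendsto_div_self_of_tendsto_atTop h₁) (tendsto_const_nhds.div_atTop h₁)
      (((h₃.continuousAt (Ioo_mem_nhds (by linarith) (by linarith))).tendsto.comp hu₃).div_atTop h₁)
    filter_upwards [Ioo_mem_nhdsGT (sub_pos.2 hv₁)] with t ht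
    exact ⟨ht.1, hv₀, (by linarith [ht.2] : t + v < 1)⟩
  simpa [simplexHessian, Matrix.mul_apply, Fin.sum_univ_two] using hlim.sq_add_le

theorem apply_one_zero_eq_zero_on_bottom_edge (h₂ : Tendsto f₂ (𝓝[>] 0) atTop)
    (h₃ : ContinuousOn f₃ (Ioo 0 1)) (hA : Continuous (uncurry A))
    (hHA : ∀ u₁ u₂, 0 < u₁ → 0 < u₂ → u₁ + u₂ < 1 →
      QuadFormNonneg (simplexHessian (f₁ u₁) (f₂ u₂) (f₃ (1 - u₁ - u₂)) * A u₁ u₂))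
    {v : ℝ} (hv₀ : 0 < v) (hv₁ : v < 1) : A v 0 1 0 = 0 := by
  have hu₃ : Tendsto (fun t => 1 - v - t) (𝓝[>] 0) (𝓝 (1 - v)) :=
    (Continuous.tendsto' (by fun_prop) 0 _ (by ring)).mono_left nhdsWithin_le_nhds
  have hlim : QuadFormNonneg (simplexHessian 0 1 0 * A v 0) := by
    refine quadFormNonneg_simplexHessian_mul_of_tendsto hA hHA (u₁ := fun _ => v) (u₂ := id) ?_
      tendsto_const_nhds (tendsto_id.mono_left nhdsWithin_le_nhds) (h₂.eventually_gt_atTop 0)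
      (tendsto_const_nhds.div_atTop h₂) (tendsto_div_self_of_tendsto_atTop h₂)
      (((h₃.continuousAt (Ioo_mem_nhds (by linarith) (by linarith))).tendsto.comp hu₃).div_atTop h₂)
    filter_upwards [Ioo_mem_nhdsGT (sub_pos.2 hv₁)] with t ht
    exact ⟨hv₀, ht.1, (by linarith [ht.2] : v + t < 1)⟩
  simpa [simplexHessian, Matrix.mul_apply, Fin.sum_univ_two] using hlim.sq_add_le

theorem colSum_eq_on_hypotenuse (h₂ : ContinuousOn f₂ (Ioo 0 1))
    (h₃ : Tendsto f₃ (𝓝[>] 0) atTop) (hA : Continuous (uncurry A))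
    (hHA : ∀ u₁ u₂, 0 < u₁ → 0 < u₂ → u₁ + u₂ < 1 →
      QuadFormNonneg (simplexHessian (f₁ u₁) (f₂ u₂) (f₃ (1 - u₁ - u₂)) * A u₁ u₂))
    {v : ℝ} (hv₀ : 0 < v) (hv₁ : v < 1) :
    A v (1 - v) 0 0 + A v (1 - v) 1 0 = A v (1 - v) 0 1 + A v (1 - v) 1 1 := by
  have hu₂ : Tendsto id (𝓝[<] (1 - v)) (𝓝 (1 - v)) := tendsto_id.mono_left nhdsWithin_le_nhds
  have hu₃ : Tendsto (fun t => 1 - v - t) (𝓝[<] (1 - v)) (𝓝[>] 0) :=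
    tendsto_nhdsWithin_iff.2 ⟨(Continuous.tendsto' (by fun_prop) _ _ (by ring)).mono_left
      nhdsWithin_le_nhds, eventually_nhdsWithin_of_forall fun _ ht => mem_Ioi.2 (sub_pos.2 ht)⟩
  have hr := h₃.comp hu₃
  have hlim : QuadFormNonneg (simplexHessian 0 0 1 * A v (1 - v)) := by
    refine quadFormNonneg_simplexHessian_mul_of_tendsto hA hHA (u₁ := fun _ => v) (u₂ := id) ?_
      tendsto_const_nhds hu₂ (hr.eventually_gt_atTop 0) (tendsto_const_nhds.div_atTop hr)
      (((h₂.continuousAt (Ioo_mem_nhds (by linarith) (by linarith))).tendsto.comp hu₂).div_atTop hr)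
      (tendsto_div_self_of_tendsto_atTop hr)
    filter_upwards [Ioo_mem_nhdsLT (sub_pos.2 hv₁)] with t ht
    exact ⟨hv₀, ht.1, (by linarith [ht.2] : v + t < 1)⟩
  have h := hlim.sq_add_le
  simp only [simplexHessian, mul_apply, of_apply, cons_val', cons_val_fin_one, cons_val_zero,
    cons_val_one, Fin.sum_univ_two, zero_add, one_mul] at h
  nlinarith [h]

end Boundary

theorem ContDiffOn.continuousOn_deriv_deriv {f : ℝ → ℝ} {s : Set ℝ} (hf : ContDiffOn ℝ 2 f s)
    (hs : IsOpen s) : ContinuousOn (deriv (deriv f)) s :=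
  (hf.deriv_of_isOpen hs (m := 1) (by norm_num)).continuousOn_deriv_of_isOpen hs le_rfl

theorem continuous_uncurry_AmatG (α11 α12 α21 α22 β11 β12 β21 β22 γ11 γ12 γ21 γ22 : ℝ) :
    Continuous (uncurry (AmatG α11 α12 α21 α22 β11 β12 β21 β22 γ11 γ12 γ21 γ22)) :=
  continuous_matrix fun i j => by
    fin_cases i <;> fin_cases j <;> simp [uncurry_def, AmatG] <;> fun_prop

theorem stmt13_general (φ1 φ2 φ3 : ℝ → ℝ)
    (hC2 : ContDiffOn ℝ 2 φ2 (Set.Ioo 0 1))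
    (hC3 : ContDiffOn ℝ 2 φ3 (Set.Ioo 0 1))
    (hlim1 : Filter.Tendsto (fun s => deriv (deriv φ1) s) (nhdsWithin 0 (Set.Ioi 0))
      Filter.atTop)
    (hlim2 : Filter.Tendsto (fun s => deriv (deriv φ2) s) (nhdsWithin 0 (Set.Ioi 0))
      Filter.atTop)
    (hlim3 : Filter.Tendsto (fun s => deriv (deriv φ3) s) (nhdsWithin 0 (Set.Ioi 0))
      Filter.atTop)
    (α11 α12 α21 α22 β11 β12 β21 β22 γ11 γ12 γ21 γ22 : ℝ)
    (hpsd : ∀ u1 u2 : ℝ, 0 < u1 → 0 < u2 → u1 + u2 < 1 → ∀ z : Fin 2 → ℝ,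
      0 ≤ z ⬝ᵥ ((!![deriv (deriv φ1) u1 + deriv (deriv φ3) (1-u1-u2),
                     deriv (deriv φ3) (1-u1-u2);
                     deriv (deriv φ3) (1-u1-u2),
                     deriv (deriv φ2) u2 + deriv (deriv φ3) (1-u1-u2)]
          * AmatG α11 α12 α21 α22 β11 β12 β21 β22 γ11 γ12 γ21 γ22 u1 u2).mulVec z)) :
    α12 = 0 ∧ α21 = 0 ∧ β21 = 0 ∧ γ12 = 0 ∧
    β12 = α11 - α22 + β11 - β22 ∧ γ21 = α22 - α11 + γ22 - γ11 := by
  have hA := continuous_uncurry_AmatG α11 α12 α21 α22 β11 β12 β21 β22 γ11 γ12 γ21 γ22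
  have h₂ := hC2.continuousOn_deriv_deriv isOpen_Ioo
  have h₃ := hC3.continuousOn_deriv_deriv isOpen_Ioo
  have left := fun v => apply_zero_one_eq_zero_on_left_edge (v := v)
    (f₂ := deriv (deriv φ2)) hlim1 h₃ hA hpsd
  have bottom := fun v => apply_one_zero_eq_zero_on_bottom_edge (v := v)
    (f₁ := deriv (deriv φ1)) hlim2 h₃ hA hpsd
  have hypotenuse := fun v => colSum_eq_on_hypotenuse (v := v)
    (f₁ := deriv (deriv φ1)) h₂ hlim3 hA hpsd
  have l₁ := left (1/4) (by norm_num) (by norm_num)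
  have l₂ := left (1/2) (by norm_num) (by norm_num)
  have b₁ := bottom (1/4) (by norm_num) (by norm_num)
  have b₂ := bottom (1/2) (by norm_num) (by norm_num)
  have c₁ := hypotenuse (1/4) (by norm_num) (by norm_num)
  have c₂ := hypotenuse (1/2) (by norm_num) (by norm_num)
  simp only [AmatG, of_apply, cons_val', cons_val_zero, cons_val_one, empty_val',
    cons_val_fin_one] at l₁ l₂ b₁ b₂ c₁ c₂
  refine ⟨?_, ?_, ?_, ?_, ?_, ?_⟩ <;> linarith

/-- Necessary conditions for the positive semidefiniteness of `H(u)A(u)` on `D`,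
where `H` is the Hessian of `h(u) = φ₁(u₁) + φ₂(u₂) + φ₃(u₃)` with `φ_k` convex,
`C²` on `(0,1)`, and `φ_k''(s) → ∞` as `s → 0⁺`. -/
theorem stmt13 (φ1 φ2 φ3 : ℝ → ℝ)
    (hC1 : ContDiffOn ℝ 2 φ1 (Set.Ioo 0 1))
    (hC2 : ContDiffOn ℝ 2 φ2 (Set.Ioo 0 1))
    (hC3 : ContDiffOn ℝ 2 φ3 (Set.Ioo 0 1))
    (hconv1 : ConvexOn ℝ (Set.Ioo 0 1) φ1)
    (hconv2 : ConvexOn ℝ (Set.Ioo 0 1) φ2)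
    (hconv3 : ConvexOn ℝ (Set.Ioo 0 1) φ3)
    (hlim1 : Filter.Tendsto (fun s => deriv (deriv φ1) s) (nhdsWithin 0 (Set.Ioi 0))
      Filter.atTop)
    (hlim2 : Filter.Tendsto (fun s => deriv (deriv φ2) s) (nhdsWithin 0 (Set.Ioi 0))
      Filter.atTop)
    (hlim3 : Filter.Tendsto (fun s => deriv (deriv φ3) s) (nhdsWithin 0 (Set.Ioi 0))
      Filter.atTop)
    (α11 α12 α21 α22 β11 β12 β21 β22 γ11 γ12 γ21 γ22 : ℝ)
    (hpsd : ∀ u1 u2 : ℝ, 0 < u1 → 0 < u2 → u1 + u2 < 1 → ∀ z : Fin 2 → ℝ,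
      0 ≤ z ⬝ᵥ ((!![deriv (deriv φ1) u1 + deriv (deriv φ3) (1-u1-u2),
                     deriv (deriv φ3) (1-u1-u2);
                     deriv (deriv φ3) (1-u1-u2),
                     deriv (deriv φ2) u2 + deriv (deriv φ3) (1-u1-u2)]
          * AmatG α11 α12 α21 α22 β11 β12 β21 β22 γ11 γ12 γ21 γ22 u1 u2).mulVec z)) :
    α12 = 0 ∧ α21 = 0 ∧ β21 = 0 ∧ γ12 = 0 ∧
    β12 = α11 - α22 + β11 - β22 ∧ γ21 = α22 - α11 + γ22 - γ11 :=
  stmt13_general φ1 φ2 φ3 hC2 hC3 hlim1 hlim2 hlim3 α11 α12 α21 α22 β11 β12 β21 β22 γ11 γ12 γ21 γ22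
    hpsd
end

section
/- Let α_{ij}, β_{ij}, γ_{ij} (i,j = 1,2) be real numbers and define the 2×2 matrices A^(1) = (α_{ij}+β_{ij}), A^(2) = (α_{ij}+γ_{ij}), A^(3) = (α_{ij}), and H^(1) = [[1,0],[0,0]], H^(2) = [[0,0],[0,1]], H^(3) = [[1,1],[1,1]]. If zᵀH^(i)A^(j)z ≥ 0 for all z ∈ ℝ² and all i,j ∈ {1,2,3} with j ≠ i, then α12 = α21 = β21 = γ12 = 0, β12 = α11 − α22 + β11 − β22, and γ21 = α22 − α11 + γ22 − γ11. -/
open Matrix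

/-- The matrices `H⁽¹⁾, H⁽²⁾, H⁽³⁾`. -/
def Hm : Fin 3 → Matrix (Fin 2) (Fin 2) ℝ :=
  ![!![1, 0; 0, 0], !![0, 0; 0, 1], !![1, 1; 1, 1]]

/-- The matrices `A⁽¹⁾ = (α_{ij}+β_{ij})`, `A⁽²⁾ = (α_{ij}+γ_{ij})`, `A⁽³⁾ = (α_{ij})`. -/
def Am (α11 α12 α21 α22 β11 β12 β21 β22 γ11 γ12 γ21 γ22 : ℝ) :
    Fin 3 → Matrix (Fin 2) (Fin 2) ℝ :=
  ![!![α11 + β11, α12 + β12; α21 + β21, α22 + β22],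
    !![α11 + γ11, α12 + γ12; α21 + γ21, α22 + γ22],
    !![α11, α12; α21, α22]]

/-!
A nonnegative binary quadratic form `a x² + b x y + c y²` has `b² ≤ 4 a c`. For `H⁽¹⁾A` the
coefficient `c` vanishes, for `H⁽²⁾A` the coefficient `a` does, so in both cases the cross term
is zero; for `H⁽³⁾A` the form is `(x + y)(p x + q y)` and the inequality reads `(p - q)² ≤ 0`.
Each of these linear relations holds for both `A⁽ʲ⁾` with `j ≠ i`, and subtracting the two
instances gives the remaining identities.
-/

namespace Matrix

/-- Positive semidefiniteness in the sense of the paper; unlike `Matrix.PosSemidef`, no symmetry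
is required. -/
def QuadFormNonneg {n : Type*} [Fintype n] (M : Matrix n n ℝ) : Prop :=
  ∀ z : n → ℝ, 0 ≤ z ⬝ᵥ M *ᵥ z

theorem QuadFormNonneg.sq_add_le {M : Matrix (Fin 2) (Fin 2) ℝ} (hM : M.QuadFormNonneg) :
    (M 0 1 + M 1 0) ^ 2 ≤ 4 * M 0 0 * M 1 1 := by
  have key := discrim_le_zero (a := M 0 0) (b := M 0 1 + M 1 0) (c := M 1 1) fun x => by
    have h := hM ![x, 1]
    simp only [dotProduct, mulVec, Fin.sum_univ_two, cons_val_zero, cons_val_one] at h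
    linear_combination h
  rw [discrim] at key
  linarith

theorem QuadFormNonneg.apply_zero_one_eq_zero_of_Hm_zero_mul {A : Matrix (Fin 2) (Fin 2) ℝ}
    (h : (Hm 0 * A).QuadFormNonneg) : A 0 1 = 0 := by
  simpa [Hm, mul_apply, Fin.sum_univ_two] using h.sq_add_le

theorem QuadFormNonneg.apply_one_zero_eq_zero_of_Hm_one_mul {A : Matrix (Fin 2) (Fin 2) ℝ}
    (h : (Hm 1 * A).QuadFormNonneg) : A 1 0 = 0 := by
  simpa [Hm, mul_apply, Fin.sum_univ_two] using h.sq_add_le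

theorem QuadFormNonneg.col_sums_eq_of_Hm_two_mul {A : Matrix (Fin 2) (Fin 2) ℝ}
    (h : (Hm 2 * A).QuadFormNonneg) : A 0 0 + A 1 0 = A 0 1 + A 1 1 := by
  have := h.sq_add_le
  simp only [Hm, cons_val, mul_apply, of_apply, cons_val', cons_val_fin_one, cons_val_zero,
    Fin.sum_univ_two, one_mul, cons_val_one] at this
  nlinarith [sq_nonneg (A 0 0 + A 1 0 - (A 0 1 + A 1 1))]

end Matrix

/-- If `H⁽ⁱ⁾A⁽ʲ⁾` is positive semidefinite for all `i ≠ j`, then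
`α12 = α21 = β21 = γ12 = 0`, `β12 = α11 - α22 + β11 - β22`, `γ21 = α22 - α11 + γ22 - γ11`. -/
theorem stmt14 (α11 α12 α21 α22 β11 β12 β21 β22 γ11 γ12 γ21 γ22 : ℝ)
    (hpsd : ∀ i j : Fin 3, j ≠ i → ∀ z : Fin 2 → ℝ,
      0 ≤ z ⬝ᵥ ((Hm i * Am α11 α12 α21 α22 β11 β12 β21 β22 γ11 γ12 γ21 γ22 j).mulVec z)) :
    α12 = 0 ∧ α21 = 0 ∧ β21 = 0 ∧ γ12 = 0 ∧
    β12 = α11 - α22 + β11 - β22 ∧ γ21 = α22 - α11 + γ22 - γ11 := by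
  have h02 := Matrix.QuadFormNonneg.apply_zero_one_eq_zero_of_Hm_zero_mul (hpsd 0 2 (by decide))
  have h01 := Matrix.QuadFormNonneg.apply_zero_one_eq_zero_of_Hm_zero_mul (hpsd 0 1 (by decide))
  have h12 := Matrix.QuadFormNonneg.apply_one_zero_eq_zero_of_Hm_one_mul (hpsd 1 2 (by decide))
  have h10 := Matrix.QuadFormNonneg.apply_one_zero_eq_zero_of_Hm_one_mul (hpsd 1 0 (by decide))
  have h20 := Matrix.QuadFormNonneg.col_sums_eq_of_Hm_two_mul (hpsd 2 0 (by decide))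
  have h21 := Matrix.QuadFormNonneg.col_sums_eq_of_Hm_two_mul (hpsd 2 1 (by decide))
  simp only [Am, cons_val, of_apply, cons_val', cons_val_one, cons_val_fin_one, cons_val_zero]
    at h02 h01 h12 h10 h20 h21
  refine ⟨h02, h12, by linarith, by linarith, by linarith, by linarith⟩
end

section
/- Let α11, α22, β11, β12, γ22 be real numbers satisfying α11 ≥ 0, α22 ≥ 0, β12 ≤ α11 + min{β11, γ22}, α11 + β11 ≥ 0, α22 + γ22 ≥ 0. Define f1(u2,u3) = (1−u2−u3)·u3·(H A)_{11}(1−u2−u3, u2) and f2(u1,u3) = (1−u1−u3)·u3·(H A)_{22}(u1, 1−u1−u3), where (HA)_{ij} denotes the (i,j) entry of H(u)A(u). Then f1 and f2 extend to polynomials on ℝ² that are nonnegative on the boundary of the triangle {(x,y) : x > 0, y > 0, x+y < 1}, and their Laplacians satisfy Δ_{(u2,u3)} f1 = −Δ_{(u1,u3)} f2 = 2(α11 − α22 + β11 − γ22). -/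
open Matrix

/-- The polynomial extension of `f₁(u₂,u₃) = (1-u₂-u₃)u₃(HA)₁₁(1-u₂-u₃, u₂)`. -/
noncomputable def f1p (a11 a22 b11 b12 g22 u2 u3 : ℝ) : ℝ :=
  (1-u2) * (a11 + b11*(1-u2-u3) + (g22-b12)*u2) + (1-u2-u3)*u2*(a22-a11+b12)

/-- The polynomial extension of `f₂(u₁,u₃) = (1-u₁-u₃)u₃(HA)₂₂(u₁, 1-u₁-u₃)`. -/
noncomputable def f2p (a11 a22 b11 b12 g22 u1 u3 : ℝ) : ℝ :=
  u1*(1-u1-u3)*b12 + (1-u1) * (a22 + (b11-(a22-a11+b12))*u1 + g22*(1-u1-u3))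

/-!
Multiplying `(HA)₁₁` by `u₁u₃` (resp. `(HA)₂₂` by `u₂u₃`) clears the denominators of the
entropy Hessian, leaving quadratic polynomials. On each edge of the triangle they factor as
`1 - x` times a convex combination of two of `α11`, `α22`, `α11 + β11`, `α22 + γ22`,
`α11 + β11 - β12`, `α11 + γ22 - β12`, all nonnegative under the hypotheses. Finally `f₁` is
quadratic in its first variable with leading coefficient `α11 - α22 + β11 - γ22` and affine in
its second, and `f₂` the same with the opposite leading coefficient.
-/

lemma deriv_deriv_of_eq_quadratic {f : ℝ → ℝ} {a b c : ℝ} (hf : ∀ t, f t = a * t ^ 2 + b * t + c)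
    (x : ℝ) : deriv (deriv f) x = 2 * a := by
  have hderiv : deriv f = fun t => 2 * a * t + b := by
    funext t
    have : HasDerivAt f (a * (2 * t ^ 1) + b) t := by
      rw [funext hf]
      exact (((hasDerivAt_pow 2 t).const_mul a).fun_add
        (((hasDerivAt_id' t).const_mul b).congr_deriv (mul_one b))).add_const c
    rw [this.deriv]
    ring
  rw [hderiv]
  simp

section Parameters

variable (a11 a22 b11 b12 g22 : ℝ)

lemma f1p_eq_mul_hessian_mul_diffusion {u2 u3 : ℝ} (hu1 : 1 - u2 - u3 ≠ 0) (hu3 : u3 ≠ 0) :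
    f1p a11 a22 b11 b12 g22 u2 u3 =
      (1 - u2 - u3) * u3 *
        (Hmat (1 - u2 - u3) u2 * Amat a11 a22 b11 b12 g22 (1 - u2 - u3) u2) 0 0 := by
  have hu3' : 1 - (1 - u2 - u3) - u2 ≠ 0 := by ring_nf; exact hu3
  simp only [Hmat, Amat, mul_apply, Fin.sum_univ_two, of_apply, cons_val', cons_val_zero,
    cons_val_one, empty_val', cons_val_fin_one, f1p]
  field_simp
  ring

lemma f2p_eq_mul_hessian_mul_diffusion {u1 u3 : ℝ} (hu2 : 1 - u1 - u3 ≠ 0) (hu3 : u3 ≠ 0) :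
    f2p a11 a22 b11 b12 g22 u1 u3 =
      (1 - u1 - u3) * u3 *
        (Hmat u1 (1 - u1 - u3) * Amat a11 a22 b11 b12 g22 u1 (1 - u1 - u3)) 1 1 := by
  have hu3' : 1 - u1 - (1 - u1 - u3) ≠ 0 := by ring_nf; exact hu3
  simp only [Hmat, Amat, mul_apply, Fin.sum_univ_two, of_apply, cons_val', cons_val_zero,
    cons_val_one, empty_val', cons_val_fin_one, f2p]
  field_simp
  ring

variable {a11 a22 b11 b12 g22}

lemma f1p_nonneg_of_boundary (h1 : 0 ≤ a11) (hg : b12 ≤ a11 + g22) (h4 : 0 ≤ a11 + b11)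
    (h5 : 0 ≤ a22 + g22) {x y : ℝ} (hx : 0 ≤ x) (hy : 0 ≤ y) (hxy : x + y ≤ 1)
    (hb : x = 0 ∨ y = 0 ∨ x + y = 1) : 0 ≤ f1p a11 a22 b11 b12 g22 x y := by
  rcases hb with rfl | rfl | hxy1
  · have : f1p a11 a22 b11 b12 g22 0 y = y * a11 + (1 - y) * (a11 + b11) := by
      unfold f1p; ring
    rw [this]
    have : 0 ≤ 1 - y := by linarith
    positivity
  · have : f1p a11 a22 b11 b12 g22 x 0 = (1 - x) * ((1 - x) * (a11 + b11) + x * (a22 + g22)) := by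
      unfold f1p; ring
    rw [this]
    have : 0 ≤ 1 - x := by linarith
    positivity
  · obtain rfl : y = 1 - x := by linarith
    have : f1p a11 a22 b11 b12 g22 x (1 - x) =
        (1 - x) * ((1 - x) * a11 + x * (a11 + g22 - b12)) := by
      unfold f1p; ring
    rw [this]
    have : 0 ≤ a11 + g22 - b12 := by linarith
    positivity

lemma f2p_nonneg_of_boundary (h2 : 0 ≤ a22) (hb : b12 ≤ a11 + b11) (h4 : 0 ≤ a11 + b11)
    (h5 : 0 ≤ a22 + g22) {x y : ℝ} (hx : 0 ≤ x) (hy : 0 ≤ y) (hxy : x + y ≤ 1)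
    (hbd : x = 0 ∨ y = 0 ∨ x + y = 1) : 0 ≤ f2p a11 a22 b11 b12 g22 x y := by
  rcases hbd with rfl | rfl | hxy1
  · have : f2p a11 a22 b11 b12 g22 0 y = y * a22 + (1 - y) * (a22 + g22) := by
      unfold f2p; ring
    rw [this]
    have : 0 ≤ 1 - y := by linarith
    positivity
  · have : f2p a11 a22 b11 b12 g22 x 0 = (1 - x) * ((1 - x) * (a22 + g22) + x * (a11 + b11)) := by
      unfold f2p; ring
    rw [this]
    have : 0 ≤ 1 - x := by linarith
    positivity
  · obtain rfl : y = 1 - x := by linarith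
    have : f2p a11 a22 b11 b12 g22 x (1 - x) =
        (1 - x) * ((1 - x) * a22 + x * (a11 + b11 - b12)) := by
      unfold f2p; ring
    rw [this]
    have : 0 ≤ a11 + b11 - b12 := by linarith
    positivity

variable (a11 a22 b11 b12 g22)

lemma laplacian_f1p (x y : ℝ) :
    deriv (deriv (fun a => f1p a11 a22 b11 b12 g22 a y)) x
      + deriv (deriv (fun b => f1p a11 a22 b11 b12 g22 x b)) y
      = 2 * (a11 - a22 + b11 - g22) := by
  rw [deriv_deriv_of_eq_quadratic (a := a11 - a22 + b11 - g22)
      (b := a22 + g22 - 2 * a11 - 2 * b11 + (a11 + b11 - a22 - b12) * y)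
      (c := f1p a11 a22 b11 b12 g22 0 y) (fun t => by unfold f1p; ring),
    deriv_deriv_of_eq_quadratic (a := 0) (b := -(1 - x) * b11 - x * (a22 - a11 + b12))
      (c := f1p a11 a22 b11 b12 g22 x 0) (fun t => by unfold f1p; ring)]
  ring

lemma laplacian_f2p (x y : ℝ) :
    deriv (deriv (fun a => f2p a11 a22 b11 b12 g22 a y)) x
      + deriv (deriv (fun b => f2p a11 a22 b11 b12 g22 x b)) y
      = -(2 * (a11 - a22 + b11 - g22)) := by
  rw [deriv_deriv_of_eq_quadratic (a := -(a11 - a22 + b11 - g22))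
      (b := a11 + b11 - 2 * a22 - 2 * g22 + (g22 - b12) * y)
      (c := f2p a11 a22 b11 b12 g22 0 y) (fun t => by unfold f2p; ring),
    deriv_deriv_of_eq_quadratic (a := 0) (b := -x * b12 - (1 - x) * g22)
      (c := f2p a11 a22 b11 b12 g22 x 0) (fun t => by unfold f2p; ring)]
  ring

end Parameters

/-- `f1p` and `f2p` are the polynomial extensions of
`(1-u₂-u₃)u₃(HA)₁₁` and `(1-u₁-u₃)u₃(HA)₂₂`; they are nonnegative on the boundary of
the triangle, and their Laplacians are the opposite constants
`±2(α11 - α22 + β11 - γ22)`. -/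
theorem stmt18 (a11 a22 b11 b12 g22 : ℝ)
    (h1 : 0 ≤ a11) (h2 : 0 ≤ a22) (h3 : b12 ≤ a11 + min b11 g22)
    (h4 : 0 ≤ a11 + b11) (h5 : 0 ≤ a22 + g22) :
    (∀ u2 u3 : ℝ, 0 < u2 → 0 < u3 → u2 + u3 < 1 →
      f1p a11 a22 b11 b12 g22 u2 u3 =
        (1-u2-u3)*u3*((Hmat (1-u2-u3) u2 * Amat a11 a22 b11 b12 g22 (1-u2-u3) u2) 0 0)) ∧
    (∀ u1 u3 : ℝ, 0 < u1 → 0 < u3 → u1 + u3 < 1 →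
      f2p a11 a22 b11 b12 g22 u1 u3 =
        (1-u1-u3)*u3*((Hmat u1 (1-u1-u3) * Amat a11 a22 b11 b12 g22 u1 (1-u1-u3)) 1 1)) ∧
    (∀ x y : ℝ, 0 ≤ x → 0 ≤ y → x + y ≤ 1 → (x = 0 ∨ y = 0 ∨ x + y = 1) →
      0 ≤ f1p a11 a22 b11 b12 g22 x y ∧ 0 ≤ f2p a11 a22 b11 b12 g22 x y) ∧
    (∀ x y : ℝ,
      deriv (deriv (fun a => f1p a11 a22 b11 b12 g22 a y)) x
        + deriv (deriv (fun b => f1p a11 a22 b11 b12 g22 x b)) y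
        = 2*(a11 - a22 + b11 - g22) ∧
      deriv (deriv (fun a => f2p a11 a22 b11 b12 g22 a y)) x
        + deriv (deriv (fun b => f2p a11 a22 b11 b12 g22 x b)) y
        = -(2*(a11 - a22 + b11 - g22))) := by
  have hb : b12 ≤ a11 + b11 := h3.trans (by gcongr; exact min_le_left _ _)
  have hg : b12 ≤ a11 + g22 := h3.trans (by gcongr; exact min_le_right _ _)
  refine ⟨fun u2 u3 _ hu3 hs => ?_, fun u1 u3 _ hu3 hs => ?_, fun x y hx hy hxy hbd => ?_,
    fun x y => ⟨laplacian_f1p .., laplacian_f2p ..⟩⟩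
  · exact f1p_eq_mul_hessian_mul_diffusion _ _ _ _ _ (by linarith) hu3.ne'
  · exact f2p_eq_mul_hessian_mul_diffusion _ _ _ _ _ (by linarith) hu3.ne'
  · exact ⟨f1p_nonneg_of_boundary h1 hg h4 h5 hx hy hxy hbd,
      f2p_nonneg_of_boundary h2 hb h4 h5 hx hy hxy hbd⟩
end

section
/- For u ∈ D let P(u) = [[1−u1, −u1],[−u2, 1−u2]]. Then: (i) H(u)P(u) = diag(1/u1, 1/u2); and (ii) for any real parameters α11, α22, β11, β12, γ22 and any ε ∈ ℝ, the matrix A(u) − εP(u) equals the structured diffusion matrix associated with the shifted parameters (α11−ε, α22−ε, β11+ε, β12+ε, γ22+ε); consequently H(u)A(u) − ε·diag(1/u1, 1/u2) = H(u)·A^ε(u), where A^ε is the structured matrix with the shifted parameters. -/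
/-!
`P(u)` is itself the structured matrix with parameters `(1, 1, -1, -1, -1)` and the structured
matrix depends linearly on its parameters, so `A - εP` is the structured matrix with shifted
parameters; multiplying by `H` and using `H P = diag(1/u₁, 1/u₂)` gives the last identity.
-/

open Matrix

def Pmat (u1 u2 : ℝ) : Matrix (Fin 2) (Fin 2) ℝ :=
  !![1-u1, -u1; -u2, 1-u2]

theorem Hmat_mul_Pmat {u1 u2 : ℝ} (hu1 : u1 ≠ 0) (hu2 : u2 ≠ 0) (hu3 : 1 - u1 - u2 ≠ 0) :
    Hmat u1 u2 * Pmat u1 u2 = !![1/u1, 0; 0, 1/u2] := by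
  ext i j
  fin_cases i <;> fin_cases j <;>
    simp [Hmat, Pmat, Matrix.mul_apply, Fin.sum_univ_two] <;> field_simp <;> ring

theorem Pmat_eq_Amat (u1 u2 : ℝ) : Pmat u1 u2 = Amat 1 1 (-1) (-1) (-1) u1 u2 := by
  ext i j
  fin_cases i <;> fin_cases j <;> simp [Amat, Pmat] <;> ring

theorem smul_Amat (c a11 a22 b11 b12 g22 u1 u2 : ℝ) :
    c • Amat a11 a22 b11 b12 g22 u1 u2 = Amat (c*a11) (c*a22) (c*b11) (c*b12) (c*g22) u1 u2 := by
  ext i j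
  fin_cases i <;> fin_cases j <;> simp [Amat] <;> ring

theorem Amat_sub_Amat (a11 a22 b11 b12 g22 a11' a22' b11' b12' g22' u1 u2 : ℝ) :
    Amat a11 a22 b11 b12 g22 u1 u2 - Amat a11' a22' b11' b12' g22' u1 u2 =
      Amat (a11-a11') (a22-a22') (b11-b11') (b12-b12') (g22-g22') u1 u2 := by
  ext i j
  fin_cases i <;> fin_cases j <;> simp [Amat] <;> ring

theorem Amat_sub_smul_Pmat (a11 a22 b11 b12 g22 ε u1 u2 : ℝ) :
    Amat a11 a22 b11 b12 g22 u1 u2 - ε • Pmat u1 u2 =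
      Amat (a11-ε) (a22-ε) (b11+ε) (b12+ε) (g22+ε) u1 u2 := by
  rw [Pmat_eq_Amat, smul_Amat, Amat_sub_Amat]
  simp only [mul_one, mul_neg, sub_neg_eq_add]

theorem Hmat_mul_Amat_sub_smul_diag (a11 a22 b11 b12 g22 ε : ℝ) {u1 u2 : ℝ} (hu1 : u1 ≠ 0)
    (hu2 : u2 ≠ 0) (hu3 : 1 - u1 - u2 ≠ 0) :
    Hmat u1 u2 * Amat a11 a22 b11 b12 g22 u1 u2 - ε • !![1/u1, 0; 0, 1/u2] =
      Hmat u1 u2 * Amat (a11-ε) (a22-ε) (b11+ε) (b12+ε) (g22+ε) u1 u2 := by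
  rw [← Amat_sub_smul_Pmat a11 a22 b11 b12 g22 ε, Matrix.mul_sub, Matrix.mul_smul,
    Hmat_mul_Pmat hu1 hu2 hu3]

/-- With `P(u) = [[1-u₁, -u₁],[-u₂, 1-u₂]]`: (i) `H(u)P(u) = diag(1/u₁, 1/u₂)`;
(ii) `A(u) - εP(u)` is the structured matrix with parameters
`(α11-ε, α22-ε, β11+ε, β12+ε, γ22+ε)`; consequently
`H(u)A(u) - ε diag(1/u₁,1/u₂) = H(u)Aᵉ(u)`. -/
theorem stmt19 (a11 a22 b11 b12 g22 ε : ℝ) :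
    ∀ u1 u2 : ℝ, 0 < u1 → 0 < u2 → u1 + u2 < 1 →
      Hmat u1 u2 * !![1-u1, -u1; -u2, 1-u2] = !![1/u1, 0; 0, 1/u2] ∧
      Amat a11 a22 b11 b12 g22 u1 u2 - ε • !![1-u1, -u1; -u2, 1-u2] =
        Amat (a11-ε) (a22-ε) (b11+ε) (b12+ε) (g22+ε) u1 u2 ∧
      Hmat u1 u2 * Amat a11 a22 b11 b12 g22 u1 u2 - ε • !![1/u1, 0; 0, 1/u2] =
        Hmat u1 u2 * Amat (a11-ε) (a22-ε) (b11+ε) (b12+ε) (g22+ε) u1 u2 := by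
  intro u1 u2 hu1 hu2 hu12
  have hu3 : 1 - u1 - u2 ≠ 0 := by linarith
  exact ⟨Hmat_mul_Pmat hu1.ne' hu2.ne' hu3, Amat_sub_smul_Pmat a11 a22 b11 b12 g22 ε u1 u2,
    Hmat_mul_Amat_sub_smul_diag a11 a22 b11 b12 g22 ε hu1.ne' hu2.ne' hu3⟩
end
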